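/- arXiv:1709.08710 — 15 statements merged into one kernel-verified Lean document; each statement's English description precedes it below -/
import Mathlib

section
/- Assume s12 ≠ 0. Then |s22| < 1, the quantity α_R := s11 + s12·conj(s22)·s12/(1 − |s22|²) equals 0, and the quantity ρ_R := |s12·s12|/(1 − |s22|²) equals 1. -/
/-! The rows of a unitary matrix are orthonormal. For the second row and `s21 = s12` this gives
`1 - |s22|² = |s12|² > 0`, and orthogonality of the two rows, `s11 · conj s12 + s12 · conj s22 = 0`,
is `α_R = 0` once the denominator `s12 · conj s12` is cleared. -/

open Matrix ComplexConjugate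

theorem mul_star_add_mul_star_eq_zero_of_mul_conjTranspose_eq_one {R : Type*} [Semiring R]
    [StarRing R] {a b c d : R} (h : !![a, b; c, d] * (!![a, b; c, d])ᴴ = 1) :
    a * star c + b * star d = 0 := by
  simpa [Matrix.mul_apply, Fin.sum_univ_two] using congrFun (congrFun h 0) 1

theorem norm_sq_add_norm_sq_of_mul_conjTranspose_eq_one {𝕜 : Type*} [RCLike 𝕜] {a b c d : 𝕜}
    (h : !![a, b; c, d] * (!![a, b; c, d])ᴴ = 1) :
    ‖c‖ ^ 2 + ‖d‖ ^ 2 = 1 := by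
  have hrow : c * conj c + d * conj d = 1 := by
    simpa [Matrix.mul_apply, Fin.sum_univ_two] using congrFun (congrFun h 1) 1
  rw [RCLike.mul_conj, RCLike.mul_conj] at hrow
  exact_mod_cast hrow

/-- For a unitary symmetric 2×2 matrix with `s12 ≠ 0`, one has `|s22| < 1`,
`α_R = s11 + s12 * conj s22 * s12 / (1 - |s22|^2) = 0` and
`ρ_R = |s12 * s12| / (1 - |s22|^2) = 1`. -/
theorem center_zero_radius_one (s11 s12 s21 s22 : ℂ)
    (hU : (!![s11, s12; s21, s22] : Matrix (Fin 2) (Fin 2) ℂ) *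
      (!![s11, s12; s21, s22] : Matrix (Fin 2) (Fin 2) ℂ).conjTranspose = 1)
    (hSym : s21 = s12) (h12 : s12 ≠ 0) :
    ‖s22‖ < 1 ∧
    s11 + s12 * (starRingEnd ℂ s22) * s12 / (1 - (‖s22‖ : ℂ) ^ 2) = 0 ∧
    ‖s12 * s12‖ / (1 - ‖s22‖ ^ 2) = 1 := by
  subst s21
  have horth := mul_star_add_mul_star_eq_zero_of_mul_conjTranspose_eq_one hU
  have hden : 1 - ‖s22‖ ^ 2 = ‖s12‖ ^ 2 := by
    linarith [norm_sq_add_norm_sq_of_mul_conjTranspose_eq_one hU]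
  have hpos : 0 < ‖s12‖ ^ 2 := by positivity
  refine ⟨(sq_lt_one_iff₀ (norm_nonneg _)).1 (by linarith), ?_, ?_⟩
  · have hdenC : 1 - (‖s22‖ : ℂ) ^ 2 = s12 * conj s12 := by
      rw [Complex.mul_conj']
      exact_mod_cast hden
    have hconj : conj s12 ≠ 0 := by simpa using h12
    rw [hdenC]
    field_simp
    simp only [starRingEnd_apply]
    linear_combination horth
  · rw [norm_mul, hden, ← sq, div_self hpos.ne']
end

section
/- Assume s12 ≠ 0. Then the set { s11 + s12²/(z − s22) : z ∈ ℂ, |z| = 1 } is exactly the unit circle { w ∈ ℂ : |w| = 1 }. (Note that s12 ≠ 0 together with unitarity forces |s22| < 1, so z − s22 ≠ 0 for every z on the unit circle.) -/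
/-!
Unitarity of `!![a, b; b, d]` gives `|a|² + |b|² = |b|² + |d|² = 1` and `a b̄ + b d̄ = 0`, and these
relations turn `|a (z - d) + b²|² - |z - d|²` into `|b|² (1 - |z|²)`. Hence `z ↦ a + b² / (z - d)`
maps the unit circle into itself. The relations are symmetric in `a` and `d`, so the inverse map
`w ↦ d + b² / (w - a)` does the same, which gives surjectivity.
-/

open ComplexConjugate

lemma unitary_symm_entries {a b d : ℂ}
    (hU : (!![a, b; b, d] : Matrix (Fin 2) (Fin 2) ℂ) *
      (!![a, b; b, d] : Matrix (Fin 2) (Fin 2) ℂ).conjTranspose = 1) :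
    ‖a‖ ^ 2 + ‖b‖ ^ 2 = 1 ∧ ‖b‖ ^ 2 + ‖d‖ ^ 2 = 1 ∧ a * conj b + b * conj d = 0 := by
  have entry (i j : Fin 2) := congrFun (congrFun hU i) j
  have h00 := entry 0 0
  have h01 := entry 0 1
  have h11 := entry 1 1
  simp only [Matrix.mul_apply, Fin.sum_univ_two, Matrix.conjTranspose_apply, Matrix.one_apply,
    Matrix.of_apply, Matrix.cons_val', Matrix.cons_val_zero, Matrix.cons_val_one,
    Matrix.empty_val', Matrix.cons_val_fin_one, RCLike.star_def, Complex.mul_conj', if_true,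
    zero_ne_one, if_false] at h00 h01 h11
  exact ⟨mod_cast h00, mod_cast h11, h01⟩

lemma sq_norm_mul_sub_add_sq {a b d : ℂ} (ha : ‖a‖ ^ 2 + ‖b‖ ^ 2 = 1)
    (hd : ‖b‖ ^ 2 + ‖d‖ ^ 2 = 1) (had : a * conj b + b * conj d = 0) (z : ℂ) :
    ‖a * (z - d) + b ^ 2‖ ^ 2 = ‖z - d‖ ^ 2 + ‖b‖ ^ 2 * (1 - ‖z‖ ^ 2) := by
  have ha' : a * conj a + b * conj b = 1 := by
    simpa [← Complex.mul_conj'] using congrArg Complex.ofReal ha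
  have hd' : b * conj b + d * conj d = 1 := by
    simpa [← Complex.mul_conj'] using congrArg Complex.ofReal hd
  have had' : conj a * b + conj b * d = 0 := by simpa using congrArg conj had
  apply Complex.ofReal_injective
  push_cast
  simp only [← Complex.mul_conj', map_add, map_mul, map_sub, map_pow]
  linear_combination (z - d) * (conj z - conj d) * ha' + (z - d) * conj b * had +
    (conj z - conj d) * b * had' + b * conj b * hd'

lemma norm_add_sq_div_sub_eq_one {a b d z : ℂ} (ha : ‖a‖ ^ 2 + ‖b‖ ^ 2 = 1)
    (hd : ‖b‖ ^ 2 + ‖d‖ ^ 2 = 1) (had : a * conj b + b * conj d = 0) (hb : b ≠ 0)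
    (hz : ‖z‖ = 1) : ‖a + b ^ 2 / (z - d)‖ = 1 := by
  have hzd : z - d ≠ 0 := by
    intro h
    rw [← sub_eq_zero.mp h, hz] at hd
    exact hb (norm_eq_zero.mp (pow_eq_zero_iff two_ne_zero |>.mp (by linarith)))
  have hnorm : ‖a * (z - d) + b ^ 2‖ = ‖z - d‖ := by
    have h := sq_norm_mul_sub_add_sq ha hd had z
    rw [hz, one_pow, sub_self, mul_zero, add_zero] at h
    exact (sq_eq_sq₀ (norm_nonneg _) (norm_nonneg _)).mp h
  rw [← mul_div_cancel_right₀ a hzd, ← add_div, norm_div, hnorm,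
    div_self (norm_ne_zero_iff.mpr hzd)]

/-- For a unitary symmetric 2×2 matrix with `s12 ≠ 0`, the image of the unit circle
under `z ↦ s11 + s12^2 / (z - s22)` is exactly the unit circle. -/
theorem mobius_image_is_unit_circle (s11 s12 s21 s22 : ℂ)
    (hU : (!![s11, s12; s21, s22] : Matrix (Fin 2) (Fin 2) ℂ) *
      (!![s11, s12; s21, s22] : Matrix (Fin 2) (Fin 2) ℂ).conjTranspose = 1)
    (hSym : s21 = s12) (h12 : s12 ≠ 0) :
    {w : ℂ | ∃ z : ℂ, ‖z‖ = 1 ∧ w = s11 + s12 ^ 2 / (z - s22)} =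
    {w : ℂ | ‖w‖ = 1} := by
  subst hSym
  obtain ⟨h11, h22, hrel⟩ := unitary_symm_entries hU
  have hrel_swap : s22 * conj s21 + s21 * conj s11 = 0 := by
    simpa [add_comm, mul_comm] using congrArg conj hrel
  ext w
  constructor
  · rintro ⟨z, hz, rfl⟩
    exact norm_add_sq_div_sub_eq_one h11 h22 hrel h12 hz
  · intro hw
    refine ⟨s22 + s21 ^ 2 / (w - s11), ?_, ?_⟩
    · exact norm_add_sq_div_sub_eq_one (by linarith) (by linarith) hrel_swap h12 hw
    · rw [add_sub_cancel_left, div_div_cancel₀ (pow_ne_zero 2 h12), add_sub_cancel]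
end

section
/- Assume s12 ≠ 0 and let γ > 0 be a real number. Define, for real L, R^asy(L) := s11 + s12²/(exp(−2iγL) − s22) (well defined since |s22| < 1). Then the set { L ∈ ℝ : L > 1 and R^asy(L) = −1 } is infinite; equivalently, the transmission quantity T^asy(L) := (1 − R^asy(L))/2 equals 1 for infinitely many L > 1. -/
/-!
Unitarity of `S` gives `s22 = det S · conj s11` with `‖det S‖ = 1`, so
`w := s22 - s12 s21 / (1 + s11)` satisfies `w (1 + s11) = det S · conj (1 + s11)` and lies on
the unit circle (`1 + s11 ≠ 0` since the first row is a unit vector and `s12 ≠ 0`).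
`R^asy(L) = -1` as soon as `exp(-2iγL) = w`, and `L ↦ exp(-2iγL)` is `π/γ`-periodic, so this
value is attained at arbitrarily large `L`.
-/

open Complex Matrix

theorem Function.Periodic.infinite_setOf_lt_and_eq {α β : Type*} [AddCommGroup α] [LinearOrder α]
    [IsOrderedAddMonoid α] [Archimedean α] {f : α → β} {c : α} (hf : Function.Periodic f c)
    (hc : 0 < c) (a x₀ : α) : {x | a < x ∧ f x = f x₀}.Infinite := by
  refine Set.infinite_of_not_bddAbove fun ⟨M, hM⟩ => ?_
  obtain ⟨n, hn⟩ := Archimedean.arch (max a M - x₀) hc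
  have hlt : max a M < x₀ + (n + 1) • c := by
    rw [succ_nsmul, ← add_assoc]
    exact (sub_le_iff_le_add'.1 hn).trans_lt (lt_add_of_pos_right _ hc)
  have hle := hM ⟨(le_max_left a M).trans_lt hlt, hf.nsmul (n + 1) x₀⟩
  exact (le_max_right a M).not_gt (hle.trans_lt' hlt)

theorem Matrix.adjugate_eq_det_smul_star_of_mem_unitaryGroup {n α : Type*} [Fintype n]
    [DecidableEq n] [CommRing α] [StarRing α] {U : Matrix n n α}
    (hU : U ∈ unitaryGroup n α) : adjugate U = U.det • star U :=
  calc adjugate U = adjugate U * (U * star U) := by rw [mem_unitaryGroup_iff.1 hU, mul_one]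
    _ = U.det • star U := by rw [← mul_assoc, adjugate_mul, smul_one_mul]

theorem Matrix.one_add_ne_zero_of_mem_unitaryGroup {a b c d : ℂ}
    (hU : !![a, b; c, d] ∈ unitaryGroup (Fin 2) ℂ) (hb : b ≠ 0) : 1 + a ≠ 0 := by
  intro h
  have hrow := congrFun (congrFun (mem_unitaryGroup_iff.1 hU) 0) 0
  exact hb (by simpa [mul_apply, Fin.sum_univ_two, eq_neg_of_add_eq_zero_right h] using hrow)

theorem Matrix.norm_sub_mul_div_one_add_eq_one {a b c d : ℂ}
    (hU : !![a, b; c, d] ∈ unitaryGroup (Fin 2) ℂ) (ha : 1 + a ≠ 0) :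
    ‖d - b * c / (1 + a)‖ = 1 := by
  have hd : d = (a * d - b * c) * star a := by
    simpa [adjugate_fin_two, det_fin_two_of] using
      congrFun (congrFun (adjugate_eq_det_smul_star_of_mem_unitaryGroup hU) 0) 0
  have hdet : ‖a * d - b * c‖ = 1 := by
    have hunit : (!![a, b; c, d]).det ∈ unitary ℂ := det_of_mem_unitary hU
    rw [← det_fin_two_of]
    exact CStarRing.norm_of_mem_unitary hunit
  have hmul : (d - b * c / (1 + a)) * (1 + a) = (a * d - b * c) * star (1 + a) := by
    rw [star_add, star_one]
    field_simp
    linear_combination hd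
  have hnorm := congrArg norm hmul
  rw [norm_mul, norm_mul, hdet, norm_star, one_mul] at hnorm
  exact (mul_eq_right₀ (norm_ne_zero_iff.2 ha)).1 hnorm

theorem exp_neg_two_mul_I_mul_periodic {γ : ℝ} (hγ : γ ≠ 0) :
    Function.Periodic (fun L : ℝ => exp (-(2 * I * γ * L))) (Real.pi / γ) := by
  intro L
  have hγ' : (γ : ℂ) ≠ 0 := ofReal_ne_zero.2 hγ
  dsimp only
  rw [← exp_periodic.sub_eq (-(2 * I * γ * L))]
  congr 1
  push_cast
  field_simp
  ring

theorem exists_exp_neg_two_mul_I_mul_eq {γ : ℝ} (hγ : γ ≠ 0) {w : ℂ} (hw : ‖w‖ = 1) :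
    ∃ L : ℝ, exp (-(2 * I * γ * L)) = w := by
  refine ⟨-arg w / (2 * γ), ?_⟩
  have hγ' : (γ : ℂ) ≠ 0 := ofReal_ne_zero.2 hγ
  convert norm_mul_exp_arg_mul_I w using 1
  rw [hw]
  push_cast
  field_simp

/-- For a unitary symmetric 2×2 matrix with `s12 ≠ 0` and `γ > 0`, the asymptotic
reflection coefficient `R^asy(L) = s11 + s12^2 / (exp(-2iγL) - s22)` equals `-1`
for infinitely many `L > 1`; equivalently, the transmission quantity
`T^asy(L) = (1 - R^asy(L))/2` equals `1` for infinitely many `L > 1`. -/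
theorem perfectly_invisible_infinitely_often (s11 s12 s21 s22 : ℂ) (γ : ℝ)
    (hU : (!![s11, s12; s21, s22] : Matrix (Fin 2) (Fin 2) ℂ) *
      (!![s11, s12; s21, s22] : Matrix (Fin 2) (Fin 2) ℂ).conjTranspose = 1)
    (hSym : s21 = s12) (h12 : s12 ≠ 0) (hγ : 0 < γ) :
    {L : ℝ | 1 < L ∧
      s11 + s12 ^ 2 / (Complex.exp (-(2 * Complex.I * (γ : ℂ) * (L : ℂ))) - s22) = -1}.Infinite ∧
    {L : ℝ | 1 < L ∧
      (1 - (s11 + s12 ^ 2 / (Complex.exp (-(2 * Complex.I * (γ : ℂ) * (L : ℂ))) - s22))) / 2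
        = 1}.Infinite := by
  have hU' : !![s11, s12; s21, s22] ∈ unitaryGroup (Fin 2) ℂ := mem_unitaryGroup_iff.2 hU
  have ha : 1 + s11 ≠ 0 := one_add_ne_zero_of_mem_unitaryGroup hU' h12
  obtain ⟨L₀, hL₀⟩ :=
    exists_exp_neg_two_mul_I_mul_eq hγ.ne' (norm_sub_mul_div_one_add_eq_one hU' ha)
  have hR : s11 + s12 ^ 2 / (s22 - s12 * s21 / (1 + s11) - s22) = -1 := by
    rw [hSym, sub_sub_cancel_left]
    field_simp
    ring
  have hS : {L : ℝ | 1 < L ∧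
      s11 + s12 ^ 2 / (exp (-(2 * I * (γ : ℂ) * (L : ℂ))) - s22) = -1}.Infinite := by
    refine Set.Infinite.mono ?_ ((exp_neg_two_mul_I_mul_periodic hγ.ne').infinite_setOf_lt_and_eq
      (div_pos Real.pi_pos hγ) 1 L₀)
    rintro L ⟨h1, hL⟩
    exact ⟨h1, by rw [hL, hL₀, hR]⟩
  exact ⟨hS, hS.mono fun L hL => ⟨hL.1, by rw [hL.2]; norm_num⟩⟩
end

section
/- Assume s12 ≠ 0. Then the set { (1 − (s11 + s12²/(z − s22)))/2 : z ∈ ℂ, |z| = 1 } is exactly the circle { w ∈ ℂ : |w − 1/2| = 1/2 } of radius 1/2 centered at 1/2. -/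
/-!
The map `f z = s11 + s12 s21 / (z - s22)` is the reflection coefficient at port 1 of the
two-port with scattering matrix `S` when port 2 is closed by a lossless load. Feeding in the
wave `(1, t)` with `t = s21 / (z - s22)` produces the wave `(f z, z t)`; since `S` is unitary
it conserves `‖·‖²`, and `‖z t‖ = ‖t‖` on the unit circle, so `‖f z‖ = 1`. The inverse of `f`
is the same construction with the two ports swapped, so `f` maps the unit circle onto itself, and
`w = (1 - f z) / 2` runs over the circle `‖w - 1/2‖ = 1/2`.
-/

namespace Matrix

variable {𝕜 n : Type*} [RCLike 𝕜] [Fintype n] [DecidableEq n] {S : Matrix n n 𝕜}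

theorem sum_norm_sq_mulVec_of_mem_unitaryGroup (hS : S ∈ unitaryGroup n 𝕜) (v : n → 𝕜) :
    ∑ i, ‖(S *ᵥ v) i‖ ^ 2 = ∑ i, ‖v i‖ ^ 2 := by
  have h : star (S *ᵥ v) ⬝ᵥ (S *ᵥ v) = star v ⬝ᵥ v := by
    rw [star_mulVec, dotProduct_mulVec, vecMul_vecMul, ← star_eq_conjTranspose,
      mem_unitaryGroup_iff'.mp hS, vecMul_one]
  simp only [dotProduct, Pi.star_apply, RCLike.star_def, RCLike.conj_mul] at h
  exact_mod_cast h

theorem sum_norm_sq_col_of_mem_unitaryGroup (hS : S ∈ unitaryGroup n 𝕜) (j : n) :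
    ∑ i, ‖S i j‖ ^ 2 = 1 := by
  simpa [mulVec_single_one, Pi.single_apply, apply_ite] using
    sum_norm_sq_mulVec_of_mem_unitaryGroup hS (Pi.single j 1)

theorem submatrix_mem_unitaryGroup (hS : S ∈ unitaryGroup n 𝕜) (e : n ≃ n) :
    S.submatrix e e ∈ unitaryGroup n 𝕜 := by
  rw [mem_unitaryGroup_iff, star_eq_conjTranspose, conjTranspose_submatrix, submatrix_mul_equiv,
    ← star_eq_conjTranspose, mem_unitaryGroup_iff.mp hS, submatrix_one_equiv]

theorem norm_lt_one_of_mem_unitaryGroup (hS : S ∈ unitaryGroup n 𝕜) {i k j : n} (hik : i ≠ k)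
    (hk : S k j ≠ 0) : ‖S i j‖ < 1 := by
  have hpair : ‖S i j‖ ^ 2 + ‖S k j‖ ^ 2 ≤ 1 :=
    calc ‖S i j‖ ^ 2 + ‖S k j‖ ^ 2 = ∑ l ∈ {i, k}, ‖S l j‖ ^ 2 :=
          (Finset.sum_pair (f := fun l ↦ ‖S l j‖ ^ 2) hik).symm
      _ ≤ ∑ l, ‖S l j‖ ^ 2 :=
          Finset.sum_le_sum_of_subset_of_nonneg (Finset.subset_univ _) fun _ _ _ ↦ by positivity
      _ = 1 := sum_norm_sq_col_of_mem_unitaryGroup hS j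
  have hk' : 0 < ‖S k j‖ := norm_pos_iff.mpr hk
  exact (sq_lt_one_iff₀ (norm_nonneg _)).mp (by nlinarith)

end Matrix

open Matrix Metric

variable {𝕜 : Type*} [RCLike 𝕜] {S : Matrix (Fin 2) (Fin 2) 𝕜}

/-- Reflection at port 1 of the two-port `S` when port 2 is terminated so that its outgoing
wave is `z` times its incoming one. -/
def inputReflection (S : Matrix (Fin 2) (Fin 2) 𝕜) (z : 𝕜) : 𝕜 :=
  S 0 0 + S 0 1 * S 1 0 / (z - S 1 1)

theorem norm_inputReflection (hS : S ∈ unitaryGroup (Fin 2) 𝕜) {z : 𝕜} (hz : ‖z‖ = 1)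
    (hzS : z ≠ S 1 1) : ‖inputReflection S z‖ = 1 := by
  set t := S 1 0 / (z - S 1 1)
  have hwave : S *ᵥ ![1, t] = ![inputReflection S z, z * t] := by
    have hzS' : z - S 1 1 ≠ 0 := sub_ne_zero.mpr hzS
    ext i
    fin_cases i
    · simp [mulVec, dotProduct, Fin.sum_univ_two, inputReflection, t, mul_div_assoc]
    · simp only [mulVec, dotProduct, Fin.mk_one, Fin.sum_univ_two, cons_val_zero, cons_val_one,
        mul_one, t]
      field_simp
      ring
  have hpower := sum_norm_sq_mulVec_of_mem_unitaryGroup hS ![1, t]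
  simp only [hwave, Fin.sum_univ_two, cons_val_zero, cons_val_one, norm_mul, hz, norm_one, one_mul,
    one_pow, add_left_inj] at hpower
  exact (pow_eq_one_iff_of_nonneg (norm_nonneg _) two_ne_zero).mp hpower

theorem inputReflection_inputReflection_swap (hS01 : S 0 1 ≠ 0) (hS10 : S 1 0 ≠ 0) {u : 𝕜}
    (hu : u ≠ S 0 0) :
    inputReflection S
      (inputReflection (S.submatrix (Equiv.swap 0 1) (Equiv.swap 0 1)) u) = u := by
  have hu' : u - S 0 0 ≠ 0 := sub_ne_zero.mpr hu
  simp only [inputReflection, submatrix_apply, Equiv.swap_apply_left, Equiv.swap_apply_right,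
    add_sub_cancel_left]
  field_simp
  ring

theorem inputReflection_image_sphere (hS : S ∈ unitaryGroup (Fin 2) 𝕜) (hS01 : S 0 1 ≠ 0)
    (hS10 : S 1 0 ≠ 0) : inputReflection S '' sphere 0 1 = sphere 0 1 := by
  have h00 : ‖S 0 0‖ < 1 := norm_lt_one_of_mem_unitaryGroup hS zero_ne_one hS10
  have h11 : ‖S 1 1‖ < 1 := norm_lt_one_of_mem_unitaryGroup hS one_ne_zero hS01
  apply (Set.image_subset_iff.mpr fun z hz ↦ ?_).antisymm fun u hu ↦ ?_
  · rw [mem_sphere_zero_iff_norm] at hz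
    rw [Set.mem_preimage, mem_sphere_zero_iff_norm]
    exact norm_inputReflection hS hz (by rintro rfl; linarith)
  · rw [mem_sphere_zero_iff_norm] at hu
    have hu0 : u ≠ S 0 0 := by rintro rfl; linarith
    refine ⟨_, ?_, inputReflection_inputReflection_swap hS01 hS10 hu0⟩
    rw [mem_sphere_zero_iff_norm]
    exact norm_inputReflection (submatrix_mem_unitaryGroup hS _) hu (by simpa using hu0)

/-- For a unitary symmetric 2×2 matrix with `s12 ≠ 0`, the image of the unit circle
under `z ↦ (1 - (s11 + s12^2 / (z - s22))) / 2` is exactly the circle of radius `1/2`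
centered at `1/2`. -/
theorem transmission_runs_on_circle (s11 s12 s21 s22 : ℂ)
    (hU : (!![s11, s12; s21, s22] : Matrix (Fin 2) (Fin 2) ℂ) *
      (!![s11, s12; s21, s22] : Matrix (Fin 2) (Fin 2) ℂ).conjTranspose = 1)
    (hSym : s21 = s12) (h12 : s12 ≠ 0) :
    {w : ℂ | ∃ z : ℂ, ‖z‖ = 1 ∧ w = (1 - (s11 + s12 ^ 2 / (z - s22))) / 2} =
    {w : ℂ | ‖w - 1 / 2‖ = 1 / 2} := by
  subst hSym
  have himage := inputReflection_image_sphere (mem_unitaryGroup_iff.mpr hU) h12 h12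
  ext w
  have hnorm : ‖1 - 2 * w‖ = 2 * ‖w - 1 / 2‖ := by
    rw [show 1 - 2 * w = -2 * (w - 1 / 2) by ring, norm_mul, norm_neg]; norm_num
  have hw : ∀ z : ℂ, w = (1 - z) / 2 ↔ z = 1 - 2 * w := fun z ↦ by
    constructor
    · intro h; linear_combination 2 * h
    · intro h; linear_combination (1 / 2) * h
  calc _ ↔ 1 - 2 * w ∈ inputReflection !![s11, s21; s21, s22] '' sphere 0 1 := by
        simp [inputReflection, hw, sq]
    _ ↔ _ := by
        rw [himage, mem_sphere_zero_iff_norm, hnorm, Set.mem_ofPred_eq]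
        constructor <;> intro h <;> linarith
end

section
/- Assume s12 ≠ 0 and let γ > 0 be a real number. Define, for real L, R^asy(L) := s11 + s12²/(exp(−2iγL) − s22) (well defined since |s22| < 1). Then the set { L ∈ ℝ : L > 1 and R^asy(L) = 1 } is infinite; equivalently, the transmission quantity T^asy(L) := (1 − R^asy(L))/2 equals 0 (perfect reflection) for infinitely many L > 1. -/
/-!
Perfect reflection at `L` means `exp(-2iγL) = w` with `w := s22 + s12² / (1 - s11)`, which makes
sense because `|s11|² + |s12|² = 1` forces `s11 ≠ 1`. Unitarity gives `adj S = det S • Sᴴ`, hence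
`s22 = det S * conj s11` and `w * (1 - s11) = -(det S * conj (1 - s11))`. Since `|det S| = 1`, the
point `w` lies on the unit circle, so `exp(-2iγL) = w` along an arithmetic progression of `L`.
-/

open Complex
open scoped Matrix ComplexConjugate

theorem Matrix.adjugate_eq_det_smul_conjTranspose {n R : Type*} [DecidableEq n] [Fintype n]
    [CommRing R] [StarRing R] {A : Matrix n n R} (hA : A * Aᴴ = 1) :
    A.adjugate = A.det • Aᴴ := by
  calc A.adjugate = A.adjugate * (A * Aᴴ) := by rw [hA, Matrix.mul_one]
    _ = A.det • Aᴴ := by rw [← Matrix.mul_assoc, Matrix.adjugate_mul, Matrix.smul_mul, Matrix.one_mul]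

theorem Matrix.norm_det_eq_one_of_mul_conjTranspose_eq_one {n : Type*} [DecidableEq n] [Fintype n]
    {A : Matrix n n ℂ} (hA : A * Aᴴ = 1) : ‖A.det‖ = 1 :=
  CStarRing.norm_of_mem_unitary (Matrix.det_of_mem_unitary (Matrix.mem_unitaryGroup_iff.mpr hA))

theorem exists_gt_exp_neg_mul_I_eq {c : ℝ} (hc : 0 < c) {w : ℂ} (hw : ‖w‖ = 1) (b : ℝ) :
    ∃ L : ℝ, b < L ∧ exp (-(c * L * I)) = w := by
  set θ := arg w
  obtain ⟨n, hn⟩ := exists_nat_gt ((b * c + θ) / (2 * Real.pi))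
  refine ⟨(2 * Real.pi * n - θ) / c, ?_, ?_⟩
  · rw [lt_div_iff₀ hc]
    linarith [(div_lt_iff₀ Real.two_pi_pos).mp hn]
  · have hc' : (c : ℂ) ≠ 0 := ofReal_ne_zero.mpr hc.ne'
    have hexp : -(c * ((2 * Real.pi * n - θ) / c : ℝ) * I) = θ * I - n * (2 * Real.pi * I) := by
      push_cast
      field_simp
      ring
    rw [hexp, exp_sub, exp_nat_mul_two_pi_mul_I, div_one]
    simpa [hw] using norm_mul_exp_arg_mul_I w

section UnitaryFinTwo

variable {a b c d : ℂ}

theorem eq_det_mul_conj_of_unitary_fin_two (hU : !![a, b; c, d] * (!![a, b; c, d])ᴴ = 1) :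
    d = !![a, b; c, d].det * conj a := by
  simpa [Matrix.adjugate_fin_two_of] using
    congrFun (congrFun (Matrix.adjugate_eq_det_smul_conjTranspose hU) 0) 0

theorem ne_one_of_unitary_fin_two (hU : !![a, b; c, d] * (!![a, b; c, d])ᴴ = 1) (hb : b ≠ 0) :
    a ≠ 1 := by
  rintro rfl
  have h00 := congrFun (congrFun hU 0) 0
  exact hb (by simpa [Matrix.mul_apply, Fin.sum_univ_two, mul_conj] using h00)

theorem exists_norm_eq_one_add_sq_div_sub_eq_one
    (hU : !![a, b; b, d] * (!![a, b; b, d])ᴴ = 1) (hb : b ≠ 0) :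
    ∃ w : ℂ, ‖w‖ = 1 ∧ a + b ^ 2 / (w - d) = 1 := by
  have ha : 1 - a ≠ 0 := sub_ne_zero.mpr (ne_one_of_unitary_fin_two hU hb).symm
  refine ⟨d + b ^ 2 / (1 - a), ?_, ?_⟩
  · have hmul : (d + b ^ 2 / (1 - a)) * (1 - a) = -(!![a, b; b, d].det * conj (1 - a)) := by
      have hd := eq_det_mul_conj_of_unitary_fin_two hU
      rw [Matrix.det_fin_two_of] at hd ⊢
      rw [add_mul, div_mul_cancel₀ _ ha, map_sub, map_one]
      linear_combination hd
    have hnorm := congrArg norm hmul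
    rw [norm_mul, norm_neg, norm_mul, Matrix.norm_det_eq_one_of_mul_conjTranspose_eq_one hU,
      norm_conj, one_mul] at hnorm
    exact (mul_eq_right₀ (norm_ne_zero_iff.mpr ha)).mp hnorm
  · rw [add_sub_cancel_left, div_div_cancel₀ (pow_ne_zero 2 hb)]
    ring

end UnitaryFinTwo

/-- For a unitary symmetric 2×2 matrix with `s12 ≠ 0` and `γ > 0`, the asymptotic
reflection coefficient `R^asy(L) = s11 + s12^2 / (exp(-2iγL) - s22)` equals `1`
for infinitely many `L > 1`; equivalently, the transmission quantity
`T^asy(L) = (1 - R^asy(L))/2` equals `0` (perfect reflection) for infinitely many `L > 1`. -/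
theorem perfect_reflection_infinitely_often (s11 s12 s21 s22 : ℂ) (γ : ℝ)
    (hU : (!![s11, s12; s21, s22] : Matrix (Fin 2) (Fin 2) ℂ) *
      (!![s11, s12; s21, s22] : Matrix (Fin 2) (Fin 2) ℂ).conjTranspose = 1)
    (hSym : s21 = s12) (h12 : s12 ≠ 0) (hγ : 0 < γ) :
    {L : ℝ | 1 < L ∧
      s11 + s12 ^ 2 / (Complex.exp (-(2 * Complex.I * (γ : ℂ) * (L : ℂ))) - s22) = 1}.Infinite ∧
    {L : ℝ | 1 < L ∧
      (1 - (s11 + s12 ^ 2 / (Complex.exp (-(2 * Complex.I * (γ : ℂ) * (L : ℂ))) - s22))) / 2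
        = 0}.Infinite := by
  rw [hSym] at hU
  obtain ⟨w, hw, hRw⟩ := exists_norm_eq_one_add_sq_div_sub_eq_one hU h12
  have hR : {L : ℝ | 1 < L ∧
      s11 + s12 ^ 2 / (Complex.exp (-(2 * Complex.I * (γ : ℂ) * (L : ℂ))) - s22) = 1}.Infinite := by
    refine Set.infinite_of_forall_exists_gt fun b ↦ ?_
    obtain ⟨L, hbL, hL⟩ := exists_gt_exp_neg_mul_I_eq (mul_pos two_pos hγ) hw (max b 1)
    refine ⟨L, ⟨(le_max_right b 1).trans_lt hbL, ?_⟩, (le_max_left b 1).trans_lt hbL⟩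
    rw [← hRw, ← hL]
    push_cast
    ring_nf
  refine ⟨hR, ?_⟩
  simpa only [div_eq_zero_iff, two_ne_zero, or_false, sub_eq_zero, eq_comm (a := (1 : ℂ))] using hR
end

section
/- Assume s12 ≠ 0 and let γ > 0 be a real number. Then the set { s11 + s12²/(exp(−2iγL) − s22) : L ∈ ℝ, L > 1 } is exactly the unit circle { w ∈ ℂ : |w| = 1 }. -/
/-!
For `|e| = 1` we have `s11 + s12² / (e - s22) = (s11 e - det S) / (e - s22)`. Inverting the
unitary `S` through its adjugate gives `s11 = det S · conj s22`, `s22 = det S · conj s11` and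
`|det S| = 1`, so the numerator is `det S · e · conj (s22 - e)`, of the same modulus as the
denominator: the map sends the unit circle into itself. Solving for `e` gives the same map with
`s11` and `s22` exchanged, so it is onto (here `s12 ≠ 0` keeps `|s11|, |s22| < 1`). Finally, as
`γ > 0`, `L ↦ exp(-2iγL)` covers the unit circle on every half-line `L > a`.
-/

open Complex ComplexConjugate Matrix

theorem Matrix.fin_two_apply_eq_det_mul_star {α : Type*} [CommRing α] [StarRing α]
    {S : Matrix (Fin 2) (Fin 2) α} (hS : S ∈ unitaryGroup (Fin 2) α) :
    S 0 0 = S.det * star (S 1 1) ∧ S 1 1 = S.det * star (S 0 0) := by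
  have hadj : adjugate S = S.det • star S := by
    rw [← mul_one (adjugate S), ← (mem_unitaryGroup_iff.1 hS), ← mul_assoc, adjugate_mul,
      smul_mul_assoc, one_mul]
  have h00 := congrFun (congrFun hadj 0) 0
  have h11 := congrFun (congrFun hadj 1) 1
  simp only [adjugate_fin_two, of_apply, cons_val', cons_val_zero, cons_val_one,
    empty_val', cons_val_fin_one, smul_apply, smul_eq_mul, star_apply] at h00 h11
  exact ⟨h11, h00⟩

theorem Matrix.norm_diag_lt_one_of_mem_unitaryGroup_fin_two {S : Matrix (Fin 2) (Fin 2) ℂ}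
    (hS : S ∈ unitaryGroup (Fin 2) ℂ) (h01 : S 0 1 ≠ 0) : ‖S 0 0‖ < 1 ∧ ‖S 1 1‖ < 1 := by
  have hrow := congrFun (congrFun (mem_unitaryGroup_iff.1 hS) 0) 0
  have hcol := congrFun (congrFun (mem_unitaryGroup_iff'.1 hS) 1) 1
  simp only [mul_apply, Fin.sum_univ_two, star_apply, one_apply_eq, RCLike.star_def] at hrow hcol
  rw [mul_conj', mul_conj'] at hrow
  rw [conj_mul', conj_mul'] at hcol
  replace hrow : ‖S 0 0‖ ^ 2 + ‖S 0 1‖ ^ 2 = 1 := by exact_mod_cast hrow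
  replace hcol : ‖S 0 1‖ ^ 2 + ‖S 1 1‖ ^ 2 = 1 := by exact_mod_cast hcol
  have h01pos : 0 < ‖S 0 1‖ := norm_pos_iff.2 h01
  constructor <;> nlinarith [norm_nonneg (S 0 0), norm_nonneg (S 1 1)]

theorem norm_add_div_sub_eq_one {a c d e : ℂ} (hdet : ‖a * d - c‖ = 1)
    (ha : a = (a * d - c) * conj d) (hd : ‖d‖ < 1) (he : ‖e‖ = 1) :
    ‖a + c / (e - d)‖ = 1 := by
  have hed : e - d ≠ 0 := fun h ↦ by rw [sub_eq_zero.1 h] at he; linarith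
  have hee : e * conj e = 1 := by rw [RCLike.mul_conj, he]; norm_num
  have hnum : a * (e - d) + c = (a * d - c) * e * conj (d - e) := by
    rw [map_sub]; linear_combination e * ha + (a * d - c) * hee
  calc ‖a + c / (e - d)‖ = ‖(a * (e - d) + c) / (e - d)‖ := by
        rw [add_div, mul_div_cancel_right₀ _ hed]
    _ = ‖d - e‖ / ‖e - d‖ := by
        rw [hnum, norm_div, norm_mul, norm_mul, hdet, he, RCLike.norm_conj, one_mul, one_mul]
    _ = 1 := by rw [norm_sub_rev, div_self (norm_ne_zero_iff.2 hed)]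

theorem exists_lt_and_exp_neg_two_mul_I_mul_eq {γ : ℝ} (hγ : 0 < γ) (a : ℝ) {z : ℂ}
    (hz : ‖z‖ = 1) : ∃ L : ℝ, a < L ∧ exp (-(2 * I * γ * L)) = z := by
  obtain ⟨n, hn⟩ := exists_nat_gt ((2 * γ * a + z.arg) / (2 * Real.pi))
  refine ⟨(2 * Real.pi * n - z.arg) / (2 * γ), ?_, ?_⟩
  · rw [lt_div_iff₀ (by positivity)]
    have := (div_lt_iff₀ (by positivity : (0:ℝ) < 2 * Real.pi)).1 hn
    linarith
  · have hexp : -(2 * I * γ * ((2 * Real.pi * n - z.arg) / (2 * γ) : ℝ))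
        = z.arg * I + (-n : ℤ) * (2 * Real.pi * I) := by
      have hγ' : (γ : ℂ) ≠ 0 := ofReal_ne_zero.2 hγ.ne'
      push_cast
      field_simp
      ring
    rw [hexp, exp_add, exp_int_mul_two_pi_mul_I, mul_one]
    simpa [hz] using norm_mul_exp_arg_mul_I z

/-- For a unitary symmetric 2×2 matrix with `s12 ≠ 0` and `γ > 0`, the set
`{ s11 + s12^2 / (exp(-2iγL) - s22) : L > 1 }` is exactly the unit circle. -/
theorem asymptotic_reflection_runs_on_unit_circle (s11 s12 s21 s22 : ℂ) (γ : ℝ)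
    (hU : (!![s11, s12; s21, s22] : Matrix (Fin 2) (Fin 2) ℂ) *
      (!![s11, s12; s21, s22] : Matrix (Fin 2) (Fin 2) ℂ).conjTranspose = 1)
    (hSym : s21 = s12) (h12 : s12 ≠ 0) (hγ : 0 < γ) :
    {w : ℂ | ∃ L : ℝ, 1 < L ∧
      w = s11 + s12 ^ 2 / (Complex.exp (-(2 * Complex.I * (γ : ℂ) * (L : ℂ))) - s22)} =
    {w : ℂ | ‖w‖ = 1} := by
  subst hSym
  have hS : !![s11, s21; s21, s22] ∈ unitaryGroup (Fin 2) ℂ := mem_unitaryGroup_iff.2 hU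
  have hdet : ‖(!![s11, s21; s21, s22]).det‖ = 1 :=
    CStarRing.norm_of_mem_unitary (det_of_mem_unitary hS)
  have hdiag := fin_two_apply_eq_det_mul_star hS
  rw [det_fin_two_of, ← sq] at hdet hdiag
  obtain ⟨h11, h22⟩ : s11 = (s11 * s22 - s21 ^ 2) * conj s22 ∧
      s22 = (s11 * s22 - s21 ^ 2) * conj s11 := hdiag
  obtain ⟨hs11, hs22⟩ : ‖s11‖ < 1 ∧ ‖s22‖ < 1 := norm_diag_lt_one_of_mem_unitaryGroup_fin_two hS h12
  ext w
  constructor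
  · rintro ⟨L, -, rfl⟩
    exact norm_add_div_sub_eq_one hdet h11 hs22 (by simp [norm_exp])
  · intro hw
    have he : ‖s22 + s21 ^ 2 / (w - s11)‖ = 1 :=
      norm_add_div_sub_eq_one (by rwa [mul_comm]) (by rwa [mul_comm s22]) hs11 hw
    obtain ⟨L, hL, hLe⟩ := exists_lt_and_exp_neg_two_mul_I_mul_eq hγ 1 he
    refine ⟨L, hL, ?_⟩
    rw [hLe, add_sub_cancel_left, div_div_cancel₀ (pow_ne_zero 2 h12), add_sub_cancel]
end

section
/- Assume λ ≠ 0 and s44 = −1. Then s14 = 0, s11 = 1, and s12 = s13 = s24 = s34 = s42 = s43 = 0 (hence by symmetry also s21 = s31 = s41 = 0). -/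
/-!
Row 4 of the unitary matrix `S` is a unit vector whose last entry `s44 = -1` already has modulus
one, so `s41 = s42 = s43 = 0`. The linear relations then give `s11 = 1`, `s12 = s13 = 0` and
`s14 = -λ - λ s44 = 0`, and symmetry transfers the zeros to the transposed entries.
-/

namespace Matrix

variable {𝕜 n : Type*} [RCLike 𝕜] [Fintype n] [DecidableEq n]

theorem sum_norm_sq_row_eq_one_of_mul_conjTranspose_eq_one {U : Matrix n n 𝕜}
    (hU : U * Uᴴ = 1) (i : n) : ∑ k, ‖U i k‖ ^ 2 = 1 := by
  have hdiag := congrFun (congrFun hU i) i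
  simp only [mul_apply, conjTranspose_apply, ← starRingEnd_apply, RCLike.mul_conj,
    one_apply_eq] at hdiag
  exact_mod_cast hdiag

theorem entry_eq_zero_of_mul_conjTranspose_eq_one_of_norm_eq_one {U : Matrix n n 𝕜}
    (hU : U * Uᴴ = 1) {i j : n} (hij : ‖U i j‖ = 1) {k : n} (hkj : k ≠ j) : U i k = 0 := by
  have hrest : ∑ m ∈ Finset.univ.erase j, ‖U i m‖ ^ 2 = 0 := by
    have hrow := sum_norm_sq_row_eq_one_of_mul_conjTranspose_eq_one hU i
    rw [← Finset.add_sum_erase _ _ (Finset.mem_univ j), hij] at hrow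
    linarith
  have hk := (Finset.sum_eq_zero_iff_of_nonneg fun m _ => sq_nonneg ‖U i m‖).mp hrest k
    (Finset.mem_erase.mpr ⟨hkj, Finset.mem_univ k⟩)
  simpa using hk

end Matrix

theorem exceptional_case_entries_vanish_general (S : Matrix (Fin 4) (Fin 4) ℂ) (l : ℂ)
    (hU : S * S.conjTranspose = 1)
    (hSym : ∀ i j, S j i = S i j)
    (h1 : S 0 0 + l * S 3 0 = 1)
    (h2 : S 0 1 + l * S 3 1 = 0)
    (h3 : S 0 2 + l * S 3 2 = 0)
    (h4 : S 0 3 + l * S 3 3 = -l)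
    (h44 : S 3 3 = -1) :
    S 0 3 = 0 ∧ S 0 0 = 1 ∧ S 0 1 = 0 ∧ S 0 2 = 0 ∧ S 1 3 = 0 ∧ S 2 3 = 0 ∧
    S 3 1 = 0 ∧ S 3 2 = 0 ∧ S 1 0 = 0 ∧ S 2 0 = 0 ∧ S 3 0 = 0 := by
  have hrow : ∀ k ≠ 3, S 3 k = 0 := fun k hk =>
    Matrix.entry_eq_zero_of_mul_conjTranspose_eq_one_of_norm_eq_one hU (by simp [h44]) hk
  have h30 : S 3 0 = 0 := hrow 0 (by decide)
  have h31 : S 3 1 = 0 := hrow 1 (by decide)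
  have h32 : S 3 2 = 0 := hrow 2 (by decide)
  have h03 : S 0 3 = 0 := by linear_combination h4 - l * h44
  have h00 : S 0 0 = 1 := by linear_combination h1 - l * h30
  have h01 : S 0 1 = 0 := by linear_combination h2 - l * h31
  have h02 : S 0 2 = 0 := by linear_combination h3 - l * h32
  exact ⟨h03, h00, h01, h02, (hSym 3 1).trans h31, (hSym 3 2).trans h32, h31, h32,
    (hSym 0 1).trans h01, (hSym 0 2).trans h02, h30⟩

/-- For a 4×4 unitary symmetric matrix `S` (entries `S i j`, with `S 0 0 = s11`, …,
`S 3 3 = s44`) satisfying the relations `s11 + λ·s41 = 1`, `s12 + λ·s42 = 0`,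
`s13 + λ·s43 = 0`, `s14 + λ·s44 = -λ` with `λ ≠ 0`: if `s44 = -1` then `s14 = 0`,
`s11 = 1` and `s12 = s13 = s24 = s34 = s42 = s43 = 0`
(hence by symmetry also `s21 = s31 = s41 = 0`). -/
theorem exceptional_case_entries_vanish (S : Matrix (Fin 4) (Fin 4) ℂ) (l : ℂ)
    (hU : S * S.conjTranspose = 1)
    (hSym : ∀ i j, S j i = S i j)
    (h1 : S 0 0 + l * S 3 0 = 1)
    (h2 : S 0 1 + l * S 3 1 = 0)
    (h3 : S 0 2 + l * S 3 2 = 0)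
    (h4 : S 0 3 + l * S 3 3 = -l)
    (hl : l ≠ 0) (h44 : S 3 3 = -1) :
    S 0 3 = 0 ∧ S 0 0 = 1 ∧ S 0 1 = 0 ∧ S 0 2 = 0 ∧ S 1 3 = 0 ∧ S 2 3 = 0 ∧
    S 3 1 = 0 ∧ S 3 2 = 0 ∧ S 1 0 = 0 ∧ S 2 0 = 0 ∧ S 3 0 = 0 :=
  exceptional_case_entries_vanish_general S l hU hSym h1 h2 h3 h4 h44
end

section
/- Assume s14 ≠ 0. Define b := (1/s14)·(2·s24·s13·s32 − s23·s14·s32 − s12·s42·s13·s34/s14) and d := s23 − s24·s13/s14. Then b = −d². -/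
/-!
Eliminating the first row through the relations `s1j = -λ·sj4` shows that `(s12, s13)` is
proportional to `(s24, s34)`, i.e. `s12·s34 = s24·s13`. Under that single relation the
expression `b` is exactly the negated completed square `-(s23 - s24·s13/s14)²`.
-/

theorem one_div_mul_eq_neg_sq_of_mul_eq_mul {K : Type*} [Field K] {a b c p q t : K}
    (ht : t ≠ 0) (hpc : p * c = b * q) :
    1 / t * (2 * b * q * a - a * t * a - p * b * q * c / t) = -(a - b * q / t) ^ 2 := by
  field_simp
  linear_combination -(b * q * hpc)

theorem b_eq_neg_d_sq_general (S : Matrix (Fin 4) (Fin 4) ℂ) (l : ℂ)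
    (hSym : ∀ i j, S j i = S i j)
    (h2 : S 0 1 + l * S 3 1 = 0)
    (h3 : S 0 2 + l * S 3 2 = 0)
    (h14 : S 0 3 ≠ 0) :
    (1 / S 0 3) * (2 * S 1 3 * S 0 2 * S 2 1 - S 1 2 * S 0 3 * S 2 1
      - S 0 1 * S 3 1 * S 0 2 * S 2 3 / S 0 3) =
    -(S 1 2 - S 1 3 * S 0 2 / S 0 3) ^ 2 := by
  rw [hSym 1 3] at h2 ⊢
  rw [hSym 2 3] at h3
  rw [hSym 1 2]
  have hprop : S 0 1 * S 2 3 = S 1 3 * S 0 2 := by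
    linear_combination S 2 3 * h2 - S 1 3 * h3
  exact one_div_mul_eq_neg_sq_of_mul_eq_mul h14 hprop

/-- For a 4×4 symmetric matrix `S` (entries `S i j`, with `S 0 0 = s11`, …,
`S 3 3 = s44`) satisfying the relations `s11 + λ·s41 = 1`, `s12 + λ·s42 = 0`,
`s13 + λ·s43 = 0`, `s14 + λ·s44 = -λ`, and `s14 ≠ 0`: with
`b := (1/s14)·(2·s24·s13·s32 - s23·s14·s32 - s12·s42·s13·s34/s14)` and
`d := s23 - s24·s13/s14`, one has `b = -d^2`. -/
theorem b_eq_neg_d_sq (S : Matrix (Fin 4) (Fin 4) ℂ) (l : ℂ)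
    (hSym : ∀ i j, S j i = S i j)
    (h1 : S 0 0 + l * S 3 0 = 1)
    (h2 : S 0 1 + l * S 3 1 = 0)
    (h3 : S 0 2 + l * S 3 2 = 0)
    (h4 : S 0 3 + l * S 3 3 = -l)
    (h14 : S 0 3 ≠ 0) :
    (1 / S 0 3) * (2 * S 1 3 * S 0 2 * S 2 1 - S 1 2 * S 0 3 * S 2 1
      - S 0 1 * S 3 1 * S 0 2 * S 2 3 / S 0 3) =
    -(S 1 2 - S 1 3 * S 0 2 / S 0 3) ^ 2 :=
  b_eq_neg_d_sq_general S l hSym h2 h3 h14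
end

section
/- The following identity holds: 2·Re( s14 · conj(s13) · s34 · conj(s44) ) = −|s13|² + |s34|²·|s14|² + |s13|²·|s44|². -/
/-!
The relations give `s13 = -λ·s34` and `s14 = -λ·(1 + s44)`. After this substitution both sides
equal `2·|λ|²·|s34|²·(Re s44 + |s44|²)`, the right-hand side through
`|1 + s44|² = 1 + 2·Re s44 + |s44|²`.
-/

open ComplexConjugate

theorem Complex.two_re_mul_conj_of_eq_neg_mul {l x y u v : ℂ}
    (hx : x = -l * y) (hu : u = -l * (1 + v)) :
    2 * (u * conj x * y * conj v).re = -‖x‖ ^ 2 + ‖y‖ ^ 2 * ‖u‖ ^ 2 + ‖x‖ ^ 2 * ‖v‖ ^ 2 := by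
  subst hx hu
  have hprod : -l * (1 + v) * conj (-l * y) * y * conj v
      = ((normSq l * normSq y : ℝ) : ℂ) * (conj v + v * conj v) := by
    simp only [map_mul, map_neg, Complex.ofReal_mul, ← Complex.mul_conj]
    ring
  have hre : (conj v + v * conj v).re = v.re + ‖v‖ ^ 2 := by
    rw [Complex.add_re, Complex.conj_re, Complex.mul_conj, Complex.ofReal_re, Complex.sq_norm]
  have hnorm : ‖1 + v‖ ^ 2 = 1 + 2 * v.re + ‖v‖ ^ 2 := by
    simp only [Complex.sq_norm, Complex.normSq_add, map_one, one_mul, Complex.conj_re]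
    ring
  rw [hprod, Complex.re_ofReal_mul, hre, norm_mul, norm_mul, norm_neg, mul_pow, mul_pow, hnorm,
    Complex.sq_norm, Complex.sq_norm, Complex.sq_norm]
  ring

theorem real_part_identity_general (S : Matrix (Fin 4) (Fin 4) ℂ) (l : ℂ)
    (hSym : ∀ i j, S j i = S i j)
    (h3 : S 0 2 + l * S 3 2 = 0)
    (h4 : S 0 3 + l * S 3 3 = -l) :
    2 * (S 0 3 * starRingEnd ℂ (S 0 2) * S 2 3 * starRingEnd ℂ (S 3 3)).re =
    -(‖S 0 2‖) ^ 2 + (‖S 2 3‖) ^ 2 * (‖S 0 3‖) ^ 2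
      + (‖S 0 2‖) ^ 2 * (‖S 3 3‖) ^ 2 := by
  have h13 : S 0 2 = -l * S 2 3 := by rw [← hSym 2 3]; linear_combination h3
  have h14 : S 0 3 = -l * (1 + S 3 3) := by linear_combination h4
  exact Complex.two_re_mul_conj_of_eq_neg_mul h13 h14

/-- For a 4×4 symmetric matrix `S` (entries `S i j`, with `S 0 0 = s11`, …,
`S 3 3 = s44`) satisfying the relations `s11 + λ·s41 = 1`, `s12 + λ·s42 = 0`,
`s13 + λ·s43 = 0`, `s14 + λ·s44 = -λ`, one has
`2·Re(s14·conj(s13)·s34·conj(s44)) = -|s13|² + |s34|²·|s14|² + |s13|²·|s44|²`. -/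
theorem real_part_identity (S : Matrix (Fin 4) (Fin 4) ℂ) (l : ℂ)
    (hSym : ∀ i j, S j i = S i j)
    (h1 : S 0 0 + l * S 3 0 = 1)
    (h2 : S 0 1 + l * S 3 1 = 0)
    (h3 : S 0 2 + l * S 3 2 = 0)
    (h4 : S 0 3 + l * S 3 3 = -l) :
    2 * (S 0 3 * starRingEnd ℂ (S 0 2) * S 2 3 * starRingEnd ℂ (S 3 3)).re =
    -(‖S 0 2‖) ^ 2 + (‖S 2 3‖) ^ 2 * (‖S 0 3‖) ^ 2
      + (‖S 0 2‖) ^ 2 * (‖S 3 3‖) ^ 2 :=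
  real_part_identity_general S l hSym h3 h4
end

section
/- Assume s14 ≠ 0, and define a := s33 − s13·s34/s14 and d := s23 − s24·s13/s14. Then |a|² + |d|² = 1. Equivalently, (|s33|² + |s23|²)·|s14|² + (|s24|² + |s34|²)·|s13|² − 2·Re( s14·conj(s13)·(s23·conj(s24) + s33·conj(s34)) ) = |s14|². -/
/-!
Indices are 0-based, as in `S i j`. The vector `w := S₀₃ • (column 2) - S₀₂ • (column 3)` is `S`
applied to `(0, 0, S₀₃, -S₀₂)`, so unitarity gives `‖w‖² = |S₀₃|² + |S₀₂|²`. Its entries are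
`w₀ = 0`, `w₁ = S₀₃·d`, `w₂ = S₀₃·a` and, since `S₀₂ = -λS₃₂` and `S₀₃ = -λ(1 + S₃₃)`,
`w₃ = -λS₃₂ = S₀₂`. Hence `|S₀₃|²(|a|² + |d|²) = |S₀₃|²`; the second identity is the same
equation with `|S₀₃·a|²` and `|S₀₃·d|²` expanded.
-/

open Matrix ComplexConjugate

theorem Matrix.star_mulVec_dotProduct_mulVec_of_conjTranspose_mul_self
    {m n R : Type*} [Fintype m] [Fintype n] [DecidableEq n] [CommSemiring R] [StarRing R]
    {A : Matrix m n R} (hA : Aᴴ * A = 1) (v : n → R) :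
    star (A *ᵥ v) ⬝ᵥ (A *ᵥ v) = star v ⬝ᵥ v := by
  rw [star_mulVec, dotProduct_mulVec, vecMul_vecMul, hA, vecMul_one]

theorem Complex.star_dotProduct_self {n : Type*} [Fintype n] (v : n → ℂ) :
    star v ⬝ᵥ v = ((∑ i, ‖v i‖ ^ 2 : ℝ) : ℂ) := by
  simp [dotProduct, Complex.conj_mul']

theorem Complex.norm_mul_sub_mul_sq (p q r s : ℂ) :
    ‖p * q - r * s‖ ^ 2 =
      ‖p‖ ^ 2 * ‖q‖ ^ 2 + ‖r‖ ^ 2 * ‖s‖ ^ 2 - 2 * (p * q * conj (r * s)).re := by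
  simp only [Complex.sq_norm, Complex.normSq_sub, Complex.normSq_mul]

theorem norm_sq_minor_add_norm_sq_minor_eq_norm_sq (S : Matrix (Fin 4) (Fin 4) ℂ) (l : ℂ)
    (hU : S * Sᴴ = 1) (h3 : S 0 2 + l * S 3 2 = 0) (h4 : S 0 3 + l * S 3 3 = -l) :
    ‖S 2 2 * S 0 3 - S 0 2 * S 2 3‖ ^ 2 + ‖S 1 2 * S 0 3 - S 1 3 * S 0 2‖ ^ 2 =
      ‖S 0 3‖ ^ 2 := by
  have hnorm := star_mulVec_dotProduct_mulVec_of_conjTranspose_mul_self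
    (mul_eq_one_comm.mp hU) ![0, 0, S 0 3, -S 0 2]
  set w := S *ᵥ ![0, 0, S 0 3, -S 0 2]
  have hw : ∀ i, w i = S i 2 * S 0 3 - S i 3 * S 0 2 := fun i => by
    simp only [w, mulVec, dotProduct, Fin.sum_univ_four, cons_val_zero, cons_val_one, cons_val,
      mul_zero, zero_add, add_zero, mul_neg]
    ring
  have hw0 : w 0 = 0 := by rw [hw]; ring
  have hw3 : w 3 = S 0 2 := by
    rw [hw]
    linear_combination S 3 2 * h4 - (1 + S 3 3) * h3
  rw [Complex.star_dotProduct_self, Complex.star_dotProduct_self, Complex.ofReal_inj] at hnorm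
  simp only [Fin.sum_univ_four, hw0, hw 1, hw 2, hw3, cons_val_zero, cons_val_one, cons_val,
    norm_zero, norm_neg, ne_eq, OfNat.ofNat_ne_zero, not_false_eq_true, zero_pow, zero_add,
    add_zero, add_left_inj] at hnorm
  rw [mul_comm (S 0 2)]
  linarith

theorem abs_a_sq_add_abs_d_sq_eq_one_general (S : Matrix (Fin 4) (Fin 4) ℂ) (l : ℂ)
    (hU : S * S.conjTranspose = 1)
    (h3 : S 0 2 + l * S 3 2 = 0)
    (h4 : S 0 3 + l * S 3 3 = -l)
    (h14 : S 0 3 ≠ 0) :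
    (‖S 2 2 - S 0 2 * S 2 3 / S 0 3‖) ^ 2
      + (‖S 1 2 - S 1 3 * S 0 2 / S 0 3‖) ^ 2 = 1 ∧
    ((‖S 2 2‖) ^ 2 + (‖S 1 2‖) ^ 2) * (‖S 0 3‖) ^ 2
      + ((‖S 1 3‖) ^ 2 + (‖S 2 3‖) ^ 2) * (‖S 0 2‖) ^ 2
      - 2 * (S 0 3 * starRingEnd ℂ (S 0 2) *
          (S 1 2 * starRingEnd ℂ (S 1 3) + S 2 2 * starRingEnd ℂ (S 2 3))).re
      = (‖S 0 3‖) ^ 2 := by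
  have hminors := norm_sq_minor_add_norm_sq_minor_eq_norm_sq S l hU h3 h4
  constructor
  · have ha : S 2 2 - S 0 2 * S 2 3 / S 0 3 = (S 2 2 * S 0 3 - S 0 2 * S 2 3) / S 0 3 := by
      field_simp
    have hd : S 1 2 - S 1 3 * S 0 2 / S 0 3 = (S 1 2 * S 0 3 - S 1 3 * S 0 2) / S 0 3 := by
      field_simp
    have hS03 : ‖S 0 3‖ ^ 2 ≠ 0 := by positivity
    rw [ha, hd, norm_div, norm_div, div_pow, div_pow, ← add_div, hminors, div_self hS03]
  · have hre : (S 0 3 * conj (S 0 2) * (S 1 2 * conj (S 1 3) + S 2 2 * conj (S 2 3))).re =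
        (S 2 2 * S 0 3 * conj (S 0 2 * S 2 3)).re + (S 1 2 * S 0 3 * conj (S 1 3 * S 0 2)).re := by
      rw [← Complex.add_re, map_mul, map_mul]
      ring_nf
    rw [Complex.norm_mul_sub_mul_sq, Complex.norm_mul_sub_mul_sq] at hminors
    rw [hre]
    linarith

/-- For a 4×4 unitary symmetric matrix `S` (entries `S i j`, with `S 0 0 = s11`, …,
`S 3 3 = s44`) satisfying the relations `s11 + λ·s41 = 1`, `s12 + λ·s42 = 0`,
`s13 + λ·s43 = 0`, `s14 + λ·s44 = -λ`, and `s14 ≠ 0`: with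
`a := s33 - s13·s34/s14` and `d := s23 - s24·s13/s14`, one has `|a|² + |d|² = 1`;
equivalently `(|s33|² + |s23|²)·|s14|² + (|s24|² + |s34|²)·|s13|²
- 2·Re(s14·conj(s13)·(s23·conj(s24) + s33·conj(s34))) = |s14|²`. -/
theorem abs_a_sq_add_abs_d_sq_eq_one (S : Matrix (Fin 4) (Fin 4) ℂ) (l : ℂ)
    (hU : S * S.conjTranspose = 1)
    (hSym : ∀ i j, S j i = S i j)
    (h1 : S 0 0 + l * S 3 0 = 1)
    (h2 : S 0 1 + l * S 3 1 = 0)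
    (h3 : S 0 2 + l * S 3 2 = 0)
    (h4 : S 0 3 + l * S 3 3 = -l)
    (h14 : S 0 3 ≠ 0) :
    (‖S 2 2 - S 0 2 * S 2 3 / S 0 3‖) ^ 2
      + (‖S 1 2 - S 1 3 * S 0 2 / S 0 3‖) ^ 2 = 1 ∧
    ((‖S 2 2‖) ^ 2 + (‖S 1 2‖) ^ 2) * (‖S 0 3‖) ^ 2
      + ((‖S 1 3‖) ^ 2 + (‖S 2 3‖) ^ 2) * (‖S 0 2‖) ^ 2
      - 2 * (S 0 3 * starRingEnd ℂ (S 0 2) *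
          (S 1 2 * starRingEnd ℂ (S 1 3) + S 2 2 * starRingEnd ℂ (S 2 3))).re
      = (‖S 0 3‖) ^ 2 :=
  abs_a_sq_add_abs_d_sq_eq_one_general S l hU h3 h4 h14
end

section
/- Assume s14 ≠ 0, and define a := s33 − s13·s34/s14, c := s22 − s12·s42/s14 and d := s23 − s24·s13/s14. Then c·conj(d) + d·conj(a) = 0. -/
/-!
Put `v := s14 • r2 - s24 • r1` and `w := s14 • r3 - s13 • r4`, where `r i` is the `i`-th row
of `S`. Since the rows of a unitary matrix are orthonormal, `v` and `w` are orthogonal. By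
symmetry of `S`, `v` vanishes in the fourth coordinate and `w` in the first, while their middle
coordinates are `s14 • (c, d)` and `s14 • (d, a)`; so `0 = v ⬝ᵥ star w = |s14|² (c d̄ + d ā)`.
-/

open Matrix

namespace Matrix

variable {n R : Type*} [Fintype n] [DecidableEq n] [CommRing R] [StarRing R]
  {S : Matrix n n R}

theorem row_dotProduct_star_row_of_ne (hU : S * Sᴴ = 1) {i j : n} (hij : i ≠ j) :
    S i ⬝ᵥ star (S j) = 0 := by
  simpa [Matrix.mul_apply, dotProduct, hij] using congr_fun (congr_fun hU i) j

theorem sub_smul_rows_dotProduct_star_eq_zero (hU : S * Sᴴ = 1) {i i' j j' : n}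
    (hij : i ≠ j) (hij' : i ≠ j') (hi'j : i' ≠ j) (hi'j' : i' ≠ j') (a b c d : R) :
    (a • S i - b • S i') ⬝ᵥ star (c • S j - d • S j') = 0 := by
  simp only [star_sub, star_smul, sub_dotProduct, dotProduct_sub, smul_dotProduct,
    dotProduct_smul, row_dotProduct_star_row_of_ne hU hij, row_dotProduct_star_row_of_ne hU hij',
    row_dotProduct_star_row_of_ne hU hi'j, row_dotProduct_star_row_of_ne hU hi'j', smul_zero,
    sub_zero]

end Matrix

/-- For a 4×4 unitary symmetric matrix `S` (entries `S i j`, with `S 0 0 = s11`, …,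
`S 3 3 = s44`) with `s14 ≠ 0`: with `a := s33 - s13·s34/s14`, `c := s22 - s12·s42/s14`
and `d := s23 - s24·s13/s14`, one has `c·conj(d) + d·conj(a) = 0`. -/
theorem c_conj_d_add_d_conj_a_eq_zero (S : Matrix (Fin 4) (Fin 4) ℂ)
    (hU : S * S.conjTranspose = 1)
    (hSym : ∀ i j, S j i = S i j)
    (h14 : S 0 3 ≠ 0) :
    (S 1 1 - S 0 1 * S 3 1 / S 0 3) * starRingEnd ℂ (S 1 2 - S 1 3 * S 0 2 / S 0 3)
      + (S 1 2 - S 1 3 * S 0 2 / S 0 3) * starRingEnd ℂ (S 2 2 - S 0 2 * S 2 3 / S 0 3)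
      = 0 := by
  have horth := sub_smul_rows_dotProduct_star_eq_zero hU (i := 1) (i' := 0) (j := 2) (j' := 3)
    (by decide) (by decide) (by decide) (by decide) (S 0 3) (S 1 3) (S 0 3) (S 0 2)
  simp only [dotProduct, Fin.sum_univ_four, Pi.sub_apply, Pi.smul_apply, Pi.star_apply,
    smul_eq_mul, hSym 0 1, hSym 0 2, hSym 0 3, hSym 1 2, hSym 1 3, hSym 2 3, star_sub,
    star_mul'] at horth
  have hstar : star (S 0 3) ≠ 0 := star_ne_zero.mpr h14
  simp only [hSym 1 3, starRingEnd_apply, star_sub, star_mul', star_div₀]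
  field_simp
  linear_combination horth
end

section
/- Assume s14 ≠ 0, define a := s33 − s13·s34/s14, and assume |a| ≠ 1. Then for every complex number z with |z| = 1, the denominator D(z) := (1 + s44)·(−z + s33) − s34·s43 is nonzero; more precisely D(z) = (−s14/λ)·(a − z). -/
/-! The relations `s13 + λ s43 = 0` and `s14 + λ s44 = -λ` give `s43 = -s13/λ` and
`1 + s44 = -s14/λ`, so the denominator factors as `(-s14/λ)(a - z)`.
The factor `-s14/λ` is nonzero, and `a - z` cannot vanish on the unit circle since `|a| ≠ 1`. -/

section Field

variable {K : Type*} [Field K]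

lemma ne_zero_of_add_mul_eq_neg {s l t : K} (hs : s ≠ 0) (h : s + l * t = -l) : l ≠ 0 := by
  rintro rfl
  exact hs (by simpa using h)

lemma one_add_mul_sub_mul_eq_div_mul {s13 s14 s33 s34 s43 s44 l z : K}
    (h3 : s13 + l * s43 = 0) (h4 : s14 + l * s44 = -l) (h14 : s14 ≠ 0) (hl : l ≠ 0) :
    (1 + s44) * (-z + s33) - s34 * s43 = (-s14 / l) * ((s33 - s13 * s34 / s14) - z) := by
  have e43 : s43 = -s13 / l := by field_simp; linear_combination h3
  have e44 : s44 = (-l - s14) / l := by field_simp; linear_combination h4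
  rw [e43, e44]
  field_simp
  ring

end Field

lemma mul_sub_ne_zero_of_norm_ne {K : Type*} [NormedField K] {c a z : K} (hc : c ≠ 0)
    (ha : ‖a‖ ≠ 1) (hz : ‖z‖ = 1) : c * (a - z) ≠ 0 :=
  mul_ne_zero hc (sub_ne_zero.mpr fun h => ha (h ▸ hz))

theorem denominator_nonzero_general (S : Matrix (Fin 4) (Fin 4) ℂ) (l : ℂ)
    (h3 : S 0 2 + l * S 3 2 = 0)
    (h4 : S 0 3 + l * S 3 3 = -l)
    (h14 : S 0 3 ≠ 0)
    (ha : ‖S 2 2 - S 0 2 * S 2 3 / S 0 3‖ ≠ 1) :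
    ∀ z : ℂ, ‖z‖ = 1 →
      (1 + S 3 3) * (-z + S 2 2) - S 2 3 * S 3 2 ≠ 0 ∧
      (1 + S 3 3) * (-z + S 2 2) - S 2 3 * S 3 2
        = (-(S 0 3) / l) * ((S 2 2 - S 0 2 * S 2 3 / S 0 3) - z) := by
  intro z hz
  have hl : l ≠ 0 := ne_zero_of_add_mul_eq_neg h14 h4
  have heq := one_add_mul_sub_mul_eq_div_mul (s34 := S 2 3) (z := z) (s33 := S 2 2) h3 h4 h14 hl
  refine ⟨?_, heq⟩
  rw [heq]
  exact mul_sub_ne_zero_of_norm_ne (div_ne_zero (neg_ne_zero.mpr h14) hl) ha hz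

/-- For a 4×4 symmetric matrix `S` (entries `S i j`, with `S 0 0 = s11`, …,
`S 3 3 = s44`) satisfying the relations `s11 + λ·s41 = 1`, `s12 + λ·s42 = 0`,
`s13 + λ·s43 = 0`, `s14 + λ·s44 = -λ`, with `s14 ≠ 0` and, for
`a := s33 - s13·s34/s14`, `|a| ≠ 1`: for every `z` on the unit circle the
denominator `D(z) := (1 + s44)·(-z + s33) - s34·s43` is nonzero; more precisely
`D(z) = (-s14/λ)·(a - z)`. -/
theorem denominator_nonzero (S : Matrix (Fin 4) (Fin 4) ℂ) (l : ℂ)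
    (hSym : ∀ i j, S j i = S i j)
    (h1 : S 0 0 + l * S 3 0 = 1)
    (h2 : S 0 1 + l * S 3 1 = 0)
    (h3 : S 0 2 + l * S 3 2 = 0)
    (h4 : S 0 3 + l * S 3 3 = -l)
    (h14 : S 0 3 ≠ 0)
    (ha : ‖S 2 2 - S 0 2 * S 2 3 / S 0 3‖ ≠ 1) :
    ∀ z : ℂ, ‖z‖ = 1 →
      (1 + S 3 3) * (-z + S 2 2) - S 2 3 * S 3 2 ≠ 0 ∧
      (1 + S 3 3) * (-z + S 2 2) - S 2 3 * S 3 2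
        = (-(S 0 3) / l) * ((S 2 2 - S 0 2 * S 2 3 / S 0 3) - z) :=
  denominator_nonzero_general S l h3 h4 h14 ha
end

section
/- Assume s14 ≠ 0, define a := s33 − s13·s34/s14, c := s22 − s12·s42/s14, d := s23 − s24·s13/s14, and assume |a| ≠ 1. Then for every complex number z with |z| = 1, setting D(z) := (1 + s44)·(−z + s33) − s34·s43 (which is nonzero), one has the identity s22 + ( s24·s43·s32 − s23·(1 + s44)·s32 )/D(z) + ( s24·(z − s33)·s42 + s23·s34·s42 )/D(z) = c − d²/(a − z). -/
/-!
The relations say that, in the columns 2, 3, 4, the first row of `S` is `-λ` times the fourth row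
of `S + E₄₄`; hence `s₁ⱼ / s₁₄ = s₄ⱼ / (1 + s₄₄)`, and `c`, `d`, `a` are the entries of the Schur
complement of `1 + s₄₄` in the symmetric block on the indices `2, 3, 4` of `S + E₄₄`. The left-hand
side is the Schur complement of the `(3, 4)`-block `[[s₃₃ - z, s₃₄], [s₄₃, 1 + s₄₄]]`, whose
determinant is `D(z) = (1 + s₄₄)(a - z)`; computing it in two steps (the quotient formula)
gives `c - d² / (a - z)`. Finally `a - z ≠ 0` because `|a| ≠ 1 = |z|`.
-/

theorem schur_complement_two_step {K : Type*} [Field K] (b p q r m e : K) (he : e ≠ 0)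
    (hr : r - m ^ 2 / e ≠ 0) :
    b - (p ^ 2 * e - 2 * p * q * m + q ^ 2 * r) / (e * r - m ^ 2)
      = (b - q ^ 2 / e) - (p - q * m / e) ^ 2 / (r - m ^ 2 / e) := by
  have hD : e * r - m ^ 2 ≠ 0 := by
    contrapose! hr
    field_simp
    linear_combination hr
  field_simp
  ring

theorem div_eq_div_one_add_of_add_mul_eq {K : Type*} [Field K] {x y u w l : K}
    (hx : x + l * y = 0) (hu : u + l * w = -l) (hu0 : u ≠ 0) : x / u = y / (1 + w) := by
  have hw : 1 + w ≠ 0 := fun h => hu0 (by linear_combination hu - l * h)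
  rw [div_eq_div_iff hu0 hw]
  linear_combination (1 + w) * hx - y * hu

theorem s22_asy_simplification_general (S : Matrix (Fin 4) (Fin 4) ℂ) (l : ℂ)
    (hSym : ∀ i j, S j i = S i j)
    (h2 : S 0 1 + l * S 3 1 = 0)
    (h3 : S 0 2 + l * S 3 2 = 0)
    (h4 : S 0 3 + l * S 3 3 = -l)
    (h14 : S 0 3 ≠ 0)
    (ha : ‖S 2 2 - S 0 2 * S 2 3 / S 0 3‖ ≠ 1) :
    ∀ z : ℂ, ‖z‖ = 1 →
      (1 + S 3 3) * (-z + S 2 2) - S 2 3 * S 3 2 ≠ 0 ∧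
      S 1 1
        + (S 1 3 * S 3 2 * S 2 1 - S 1 2 * (1 + S 3 3) * S 2 1)
            / ((1 + S 3 3) * (-z + S 2 2) - S 2 3 * S 3 2)
        + (S 1 3 * (z - S 2 2) * S 3 1 + S 1 2 * S 2 3 * S 3 1)
            / ((1 + S 3 3) * (-z + S 2 2) - S 2 3 * S 3 2)
      = (S 1 1 - S 0 1 * S 3 1 / S 0 3)
        - (S 1 2 - S 1 3 * S 0 2 / S 0 3) ^ 2
            / ((S 2 2 - S 0 2 * S 2 3 / S 0 3) - z) := by
  intro z hz
  have he : 1 + S 3 3 ≠ 0 := fun h => h14 (by linear_combination h4 - l * h)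
  have hratio1 : S 0 1 / S 0 3 = S 1 3 / (1 + S 3 3) := by
    rw [← hSym 1 3]
    exact div_eq_div_one_add_of_add_mul_eq h2 h4 h14
  have hratio2 : S 0 2 / S 0 3 = S 2 3 / (1 + S 3 3) := by
    rw [← hSym 2 3]
    exact div_eq_div_one_add_of_add_mul_eq h3 h4 h14
  have haz : S 2 2 - S 0 2 * S 2 3 / S 0 3 - z ≠ 0 := sub_ne_zero.2 fun h => ha (h ▸ hz)
  rw [mul_div_right_comm (S 0 2), hratio2] at haz ⊢
  rw [mul_div_right_comm (S 0 1), hratio1, mul_div_assoc (S 1 3), hratio2,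
    hSym 1 2, hSym 1 3, hSym 2 3]
  have hD : (1 + S 3 3) * (-z + S 2 2) - S 2 3 * S 2 3
      = (1 + S 3 3) * (S 2 2 - S 2 3 / (1 + S 3 3) * S 2 3 - z) := by
    field_simp
    ring
  refine ⟨hD ▸ mul_ne_zero he haz, ?_⟩
  have hschur := schur_complement_two_step (S 1 1) (S 1 2) (S 1 3) (S 2 2 - z) (S 2 3)
    (1 + S 3 3) he (by convert haz using 1; ring)
  convert hschur using 2 <;> ring

/-- For a 4×4 symmetric matrix `S` (entries `S i j`, with `S 0 0 = s11`, …,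
`S 3 3 = s44`) satisfying the relations `s11 + λ·s41 = 1`, `s12 + λ·s42 = 0`,
`s13 + λ·s43 = 0`, `s14 + λ·s44 = -λ`, with `s14 ≠ 0` and, for
`a := s33 - s13·s34/s14`, `|a| ≠ 1`: for every `z` on the unit circle, with
`D(z) := (1 + s44)·(-z + s33) - s34·s43` (which is nonzero), one has
`s22 + (s24·s43·s32 - s23·(1 + s44)·s32)/D(z) + (s24·(z - s33)·s42 + s23·s34·s42)/D(z)
 = c - d²/(a - z)` where `c := s22 - s12·s42/s14` and `d := s23 - s24·s13/s14`. -/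
theorem s22_asy_simplification (S : Matrix (Fin 4) (Fin 4) ℂ) (l : ℂ)
    (hSym : ∀ i j, S j i = S i j)
    (h1 : S 0 0 + l * S 3 0 = 1)
    (h2 : S 0 1 + l * S 3 1 = 0)
    (h3 : S 0 2 + l * S 3 2 = 0)
    (h4 : S 0 3 + l * S 3 3 = -l)
    (h14 : S 0 3 ≠ 0)
    (ha : ‖S 2 2 - S 0 2 * S 2 3 / S 0 3‖ ≠ 1) :
    ∀ z : ℂ, ‖z‖ = 1 →
      (1 + S 3 3) * (-z + S 2 2) - S 2 3 * S 3 2 ≠ 0 ∧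
      S 1 1
        + (S 1 3 * S 3 2 * S 2 1 - S 1 2 * (1 + S 3 3) * S 2 1)
            / ((1 + S 3 3) * (-z + S 2 2) - S 2 3 * S 3 2)
        + (S 1 3 * (z - S 2 2) * S 3 1 + S 1 2 * S 2 3 * S 3 1)
            / ((1 + S 3 3) * (-z + S 2 2) - S 2 3 * S 3 2)
      = (S 1 1 - S 0 1 * S 3 1 / S 0 3)
        - (S 1 2 - S 1 3 * S 0 2 / S 0 3) ^ 2
            / ((S 2 2 - S 0 2 * S 2 3 / S 0 3) - z) :=
  s22_asy_simplification_general S l hSym h2 h3 h4 h14 ha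
end

section
/- Assume s14 ≠ 0, define a := s33 − s13·s34/s14, and assume |a| ≠ 1. Let k > 0 be a real number and define, for real L > 1, s22^asy(L) := s22 + ( s24·s43·s32 − s23·(1 + s44)·s32 )/D(L) + ( s24·(exp(−2ikL) − s33)·s42 + s23·s34·s42 )/D(L), where D(L) := (1 + s44)·(−exp(−2ikL) + s33) − s34·s43 (which is nonzero for all L > 1). Then the set { s22^asy(L) : L ∈ ℝ, L > 1 } is exactly the unit circle { w ∈ ℂ : |w| = 1 }. -/
/-!
Closing port 4 by a load of reflection coefficient `-1` (the denominators `1 + s44`) turns `S`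
into a unitary `3 × 3` matrix whose first row is `s1j + λ s4j`, since `s14 = -λ (1 + s44)`. By the
relations port 1 decouples, leaving a unitary two-port `M` on ports 2, 3 with `M₂₂ = a`, and
`s22^asy(L)` is the reflection of `M` at port 2 when port 3 is closed by the load `exp(2ikL)`:
the Möbius map `z ↦ M₁₁ + M₁₂ M₂₁ / (z - a)` at `z = exp(-2ikL)`. Unitarity of `M` makes this map
preserve the unit circle; `|a| ≠ 1` forces `|M₁₁| ≠ 1` and `M₁₂ M₂₁ ≠ 0`, so it is onto, and
`exp(-2ikL)` covers the circle as `L` runs over `(1, ∞)`.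
-/

open Matrix Complex ComplexConjugate Metric Set

/-- The matrix seen at the first `n` ports of `S` when the last port is closed by a load with
reflection coefficient `-1`. -/
def shortLast {K : Type*} [Field K] {n : ℕ} (S : Matrix (Fin (n + 1)) (Fin (n + 1)) K) :
    Matrix (Fin n) (Fin n) K :=
  fun i j => S i.castSucc j.castSucc
    - S i.castSucc (Fin.last n) / (1 + S (Fin.last n) (Fin.last n)) * S (Fin.last n) j.castSucc

/-- The reflection at port `0` of the two-port `M` when port `1` is closed by a load with
reflection coefficient `z⁻¹`. -/
def loadedReflection {K : Type*} [Field K] (M : Matrix (Fin 2) (Fin 2) K) (z : K) : K :=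
  M 0 0 + M 0 1 * M 1 0 / (z - M 1 1)

theorem shortLast_mem_unitaryGroup {K : Type*} [Field K] [StarRing K] {n : ℕ}
    {S : Matrix (Fin (n + 1)) (Fin (n + 1)) K}
    (hS : S ∈ unitaryGroup (Fin (n + 1)) K) (hp : 1 + S (Fin.last n) (Fin.last n) ≠ 0) :
    shortLast S ∈ unitaryGroup (Fin n) K := by
  rw [mem_unitaryGroup_iff] at hS ⊢
  have row (a b : Fin (n + 1)) : ∑ m : Fin n, S a m.castSucc * star (S b m.castSucc)
      = (1 : Matrix _ _ K) a b - S a (Fin.last n) * star (S b (Fin.last n)) := by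
    have := congrFun (congrFun hS a) b
    rw [mul_apply, Fin.sum_univ_castSucc] at this
    simp only [star_apply] at this
    rw [← this]; ring
  ext i j
  -- Row `i` of `shortLast S` is row `i` of `S` minus `c i` times the last row, cut off before the
  -- last coordinate; that coordinate equals `c i`, which accounts for the correction in `row`.
  set c : Fin n → K := fun i => S i.castSucc (Fin.last n) / (1 + S (Fin.last n) (Fin.last n))
  have hc (i : Fin n) : S i.castSucc (Fin.last n) = c i * (1 + S (Fin.last n) (Fin.last n)) := by
    simp only [c]; field_simp
  have expand : (shortLast S * star (shortLast S)) i j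
      = ∑ m : Fin n, S i.castSucc m.castSucc * star (S j.castSucc m.castSucc)
        - star (c j) * ∑ m : Fin n, S i.castSucc m.castSucc * star (S (Fin.last n) m.castSucc)
        - c i * ∑ m : Fin n, S (Fin.last n) m.castSucc * star (S j.castSucc m.castSucc)
        + c i * star (c j) *
          ∑ m : Fin n, S (Fin.last n) m.castSucc * star (S (Fin.last n) m.castSucc) := by
    simp only [mul_apply, star_apply, shortLast, Finset.mul_sum, ← Finset.sum_sub_distrib,
      ← Finset.sum_add_distrib, star_sub, star_mul']
    refine Finset.sum_congr rfl fun m _ => ?_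
    simp only [c]; ring
  rw [expand, row, row, row, row, hc i, hc j]
  simp only [one_apply, Fin.castSucc_inj, Fin.castSucc_ne_last, (Fin.castSucc_ne_last _).symm,
    if_true, if_false, star_mul', star_add, star_one]
  ring

theorem submatrix_succ_mem_unitaryGroup {R : Type*} [CommRing R] [StarRing R] {n : ℕ}
    {U : Matrix (Fin (n + 1)) (Fin (n + 1)) R} (hU : U ∈ unitaryGroup (Fin (n + 1)) R)
    (h0 : ∀ j : Fin n, U 0 j.succ = 0) :
    U.submatrix Fin.succ Fin.succ ∈ unitaryGroup (Fin n) R := by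
  rw [mem_unitaryGroup_iff] at hU ⊢
  have row (a b : Fin (n + 1)) :
      U a 0 * star (U b 0) + ∑ m : Fin n, U a m.succ * star (U b m.succ)
        = (1 : Matrix _ _ R) a b := by
    rw [← Fin.sum_univ_succ (f := fun m => U a m * star (U b m))]
    exact congrFun (congrFun hU a) b
  have h00 : U 0 0 * star (U 0 0) = 1 := by simpa [h0] using row 0 0
  have hcol (i : Fin n) : U i.succ 0 = 0 := by
    have h : U i.succ 0 * star (U 0 0) = 0 := by simpa [h0] using row i.succ 0
    linear_combination U 0 0 * h - U i.succ 0 * h00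
  ext i j
  simpa [mul_apply, hcol, one_apply] using row i.succ j.succ

theorem loadedReflection_submatrix_shortLast {K : Type*} [Field K] (S : Matrix (Fin 4) (Fin 4) K)
    (hp : 1 + S 3 3 ≠ 0) {z : K} (hz : z ≠ shortLast S 2 2) :
    loadedReflection ((shortLast S).submatrix Fin.succ Fin.succ) z = S 1 1
        + (S 1 3 * S 3 2 * S 2 1 - S 1 2 * (1 + S 3 3) * S 2 1)
            / ((1 + S 3 3) * (-z + S 2 2) - S 2 3 * S 3 2)
        + (S 1 3 * (z - S 2 2) * S 3 1 + S 1 2 * S 2 3 * S 3 1)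
            / ((1 + S 3 3) * (-z + S 2 2) - S 2 3 * S 3 2) := by
  set M := (shortLast S).submatrix Fin.succ Fin.succ
  set D := (1 + S 3 3) * (-z + S 2 2) - S 2 3 * S 3 2
  have hzM : z - M 1 1 = -D / (1 + S 3 3) := by
    simp only [M, D, submatrix_apply, shortLast, Fin.succ_one_eq_two, Fin.reduceCastSucc,
      Fin.reduceLast, Fin.isValue]
    field_simp
    ring
  have hD : D ≠ 0 := by
    intro hD
    rw [hD, neg_zero, zero_div, sub_eq_zero] at hzM
    exact hz hzM
  rw [loadedReflection, hzM]
  simp only [M, submatrix_apply, shortLast, Fin.succ_zero_eq_one, Fin.succ_one_eq_two,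
    Fin.castSucc_one, Fin.reduceCastSucc, Fin.reduceLast, Fin.isValue]
  field_simp
  ring

theorem norm_eq_one_of_mul_conj_eq_one {w : ℂ} (h : w * conj w = 1) : ‖w‖ = 1 := by
  have : ‖w‖ ^ 2 = 1 := by exact_mod_cast (mul_conj' w).symm.trans h
  exact (pow_eq_one_iff_of_nonneg (norm_nonneg w) two_ne_zero).mp this

theorem norm_add_mul_div_sub_eq_one {A B C a z : ℂ}
    (hcol₁ : conj A * A + conj C * C = 1) (hcol₂ : conj B * B + conj a * a = 1)
    (horth : conj A * B + conj C * a = 0) (hz : ‖z‖ = 1) (hza : z ≠ a) :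
    ‖A + B * C / (z - a)‖ = 1 := by
  have hz' : z * conj z = 1 := by rw [mul_conj', hz]; norm_num
  have hza' : z - a ≠ 0 := sub_ne_zero.mpr hza
  have hza'' : conj z - conj a ≠ 0 := by rw [← map_sub]; exact (map_ne_zero _).mpr hza'
  have horth' : A * conj B + C * conj a = 0 := by
    simpa using congrArg conj horth
  apply norm_eq_one_of_mul_conj_eq_one
  rw [map_add, map_div₀, map_mul, map_sub]
  field_simp
  linear_combination (z - a) * (conj z - conj a) * hcol₁ + conj C * (z - a) * horth'
    + C * (conj z - conj a) * horth + C * conj C * hcol₂ - C * conj C * hz'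

theorem loadedReflection_image_sphere {M : Matrix (Fin 2) (Fin 2) ℂ}
    (hM : M ∈ unitaryGroup (Fin 2) ℂ) (ha : ‖M 1 1‖ ≠ 1) :
    loadedReflection M '' sphere 0 1 = sphere 0 1 := by
  have cols := Unitary.star_mul_self_of_mem hM
  have rows := Unitary.mul_star_self_of_mem hM
  simp only [← Matrix.ext_iff, Fin.forall_fin_two, mul_apply, Fin.sum_univ_two, star_apply,
    RCLike.star_def, one_apply_eq, one_apply_ne, ne_eq, zero_ne_one, one_ne_zero,
    not_false_eq_true] at cols rows
  obtain ⟨⟨c00, c01⟩, -, c11⟩ := cols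
  obtain ⟨⟨r00, -⟩, -, r11⟩ := rows
  have hB : M 0 1 ≠ 0 := by
    intro hB
    refine ha (norm_eq_one_of_mul_conj_eq_one ?_)
    simpa [hB, mul_comm] using c11
  have hC : M 1 0 ≠ 0 := by
    intro hC
    refine ha (norm_eq_one_of_mul_conj_eq_one ?_)
    simpa [hC] using r11
  have hA : ‖M 0 0‖ ≠ 1 := by
    intro hA
    refine hB (by simpa [mul_conj', hA] using r00)
  refine (image_subset_iff.mpr fun z hz => ?_).antisymm fun w hw => ?_
  · rw [mem_sphere_zero_iff_norm] at hz
    rw [mem_preimage, mem_sphere_zero_iff_norm]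
    exact norm_add_mul_div_sub_eq_one c00 c11 c01 hz (by rintro rfl; exact ha hz)
  · rw [mem_sphere_zero_iff_norm] at hw
    refine ⟨M 1 1 + M 1 0 * M 0 1 / (w - M 0 0), ?_, ?_⟩
    · rw [mem_sphere_zero_iff_norm]
      -- the column relations of `M` with its two ports swapped
      refine norm_add_mul_div_sub_eq_one (by linear_combination c11) (by linear_combination c00)
        (by simpa [mul_comm, add_comm] using congrArg conj c01) hw (by rintro rfl; exact hA hw)
    · have hwA : w - M 0 0 ≠ 0 := sub_ne_zero.mpr (by rintro rfl; exact hA hw)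
      rw [loadedReflection, add_sub_cancel_left]
      field_simp
      ring

theorem norm_exp_neg_two_mul_I (k L : ℝ) : ‖exp (-(2 * I * k * L))‖ = 1 := by
  rw [norm_exp]; simp

theorem image_exp_neg_two_mul_I_Ioi {k : ℝ} (hk : 0 < k) (t₀ : ℝ) :
    (fun L : ℝ => exp (-(2 * I * k * L))) '' Ioi t₀ = sphere 0 1 := by
  refine (image_subset_iff.mpr fun L _ => ?_).antisymm fun w hw => ?_
  · simp [norm_exp_neg_two_mul_I]
  obtain ⟨θ, rfl⟩ := (norm_eq_one_iff w).mp (mem_sphere_zero_iff_norm.mp hw)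
  obtain ⟨n, hn⟩ := exists_nat_gt ((2 * k * t₀ + θ) / (2 * Real.pi))
  refine ⟨(2 * Real.pi * n - θ) / (2 * k), ?_, ?_⟩
  · rw [mem_Ioi, lt_div_iff₀ (by positivity)]
    have := (div_lt_iff₀ (by positivity)).mp hn
    linarith
  · have hk' : (k : ℂ) ≠ 0 := by exact_mod_cast hk.ne'
    have : -(2 * I * k * ((2 * Real.pi * n - θ) / (2 * k) : ℝ))
        = θ * I - (n : ℤ) * (2 * Real.pi * I) := by
      push_cast
      field_simp
      ring
    simp only [this, exp_sub, exp_int_mul_two_pi_mul_I, div_one]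

theorem s22_asy_runs_on_unit_circle_general (S : Matrix (Fin 4) (Fin 4) ℂ) (l : ℂ) (k : ℝ)
    (hU : S * S.conjTranspose = 1)
    (h2 : S 0 1 + l * S 3 1 = 0)
    (h3 : S 0 2 + l * S 3 2 = 0)
    (h4 : S 0 3 + l * S 3 3 = -l)
    (h14 : S 0 3 ≠ 0)
    (ha : ‖S 2 2 - S 0 2 * S 2 3 / S 0 3‖ ≠ 1)
    (hk : 0 < k) :
    {w : ℂ | ∃ L : ℝ, 1 < L ∧
      w = S 1 1
        + (S 1 3 * S 3 2 * S 2 1 - S 1 2 * (1 + S 3 3) * S 2 1)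
            / ((1 + S 3 3) * (-Complex.exp (-(2 * Complex.I * (k : ℂ) * (L : ℂ))) + S 2 2)
                - S 2 3 * S 3 2)
        + (S 1 3 * (Complex.exp (-(2 * Complex.I * (k : ℂ) * (L : ℂ))) - S 2 2) * S 3 1
            + S 1 2 * S 2 3 * S 3 1)
            / ((1 + S 3 3) * (-Complex.exp (-(2 * Complex.I * (k : ℂ) * (L : ℂ))) + S 2 2)
                - S 2 3 * S 3 2)} =
    {w : ℂ | ‖w‖ = 1} := by
  have hs03 : S 0 3 = -l * (1 + S 3 3) := by linear_combination h4
  have hp : 1 + S 3 3 ≠ 0 := fun hp => h14 (by rw [hs03, hp, mul_zero])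
  have hl : l ≠ 0 := fun hl => h14 (by rw [hs03, hl, neg_zero, zero_mul])
  have hrow (j : Fin 3) : shortLast S 0 j = S 0 j.castSucc + l * S 3 j.castSucc := by
    simp only [shortLast, Fin.castSucc_zero, Fin.reduceLast, hs03]
    field_simp
    ring
  set M := (shortLast S).submatrix Fin.succ Fin.succ
  have hM : M ∈ unitaryGroup (Fin 2) ℂ := by
    refine submatrix_succ_mem_unitaryGroup
      (shortLast_mem_unitaryGroup (mem_unitaryGroup_iff.mpr hU) hp) fun j => ?_
    fin_cases j
    exacts [(hrow 1).trans h2, (hrow 2).trans h3]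
  have ha' : ‖M 1 1‖ ≠ 1 := by
    convert ha using 2
    simp only [M, submatrix_apply, shortLast, Fin.succ_one_eq_two, Fin.reduceCastSucc,
      Fin.reduceLast, Fin.isValue, hs03, show S 0 2 = -l * S 3 2 by linear_combination h3]
    field_simp
  have hzM (L : ℝ) : exp (-(2 * I * k * L)) ≠ M 1 1 := fun h =>
    ha' (h ▸ norm_exp_neg_two_mul_I k L)
  calc _ = (loadedReflection M ∘ fun L : ℝ => exp (-(2 * I * k * L))) '' Ioi 1 := by
        ext w
        simp only [mem_ofPred_eq, mem_image, mem_Ioi, Function.comp_apply, eq_comm]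
        exact exists_congr fun L => and_congr_right fun _ => by
          rw [loadedReflection_submatrix_shortLast S hp (hzM L)]
    _ = {w : ℂ | ‖w‖ = 1} := by
        rw [image_comp, image_exp_neg_two_mul_I_Ioi hk, loadedReflection_image_sphere hM ha']
        ext w
        exact mem_sphere_zero_iff_norm

/-- For a 4×4 unitary symmetric matrix `S` (entries `S i j`, with `S 0 0 = s11`, …,
`S 3 3 = s44`) satisfying the relations `s11 + λ·s41 = 1`, `s12 + λ·s42 = 0`,
`s13 + λ·s43 = 0`, `s14 + λ·s44 = -λ`, with `s14 ≠ 0`, `|a| ≠ 1` for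
`a := s33 - s13·s34/s14`, and `k > 0`: the set
`{ s22^asy(L) : L > 1 }` with
`s22^asy(L) := s22 + (s24·s43·s32 - s23·(1+s44)·s32)/D(L)
  + (s24·(exp(-2ikL) - s33)·s42 + s23·s34·s42)/D(L)` and
`D(L) := (1+s44)·(-exp(-2ikL) + s33) - s34·s43` is exactly the unit circle. -/
theorem s22_asy_runs_on_unit_circle (S : Matrix (Fin 4) (Fin 4) ℂ) (l : ℂ) (k : ℝ)
    (hU : S * S.conjTranspose = 1)
    (hSym : ∀ i j, S j i = S i j)
    (h1 : S 0 0 + l * S 3 0 = 1)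
    (h2 : S 0 1 + l * S 3 1 = 0)
    (h3 : S 0 2 + l * S 3 2 = 0)
    (h4 : S 0 3 + l * S 3 3 = -l)
    (h14 : S 0 3 ≠ 0)
    (ha : ‖S 2 2 - S 0 2 * S 2 3 / S 0 3‖ ≠ 1)
    (hk : 0 < k) :
    {w : ℂ | ∃ L : ℝ, 1 < L ∧
      w = S 1 1
        + (S 1 3 * S 3 2 * S 2 1 - S 1 2 * (1 + S 3 3) * S 2 1)
            / ((1 + S 3 3) * (-Complex.exp (-(2 * Complex.I * (k : ℂ) * (L : ℂ))) + S 2 2)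
                - S 2 3 * S 3 2)
        + (S 1 3 * (Complex.exp (-(2 * Complex.I * (k : ℂ) * (L : ℂ))) - S 2 2) * S 3 1
            + S 1 2 * S 2 3 * S 3 1)
            / ((1 + S 3 3) * (-Complex.exp (-(2 * Complex.I * (k : ℂ) * (L : ℂ))) + S 2 2)
                - S 2 3 * S 3 2)} =
    {w : ℂ | ‖w‖ = 1} :=
  s22_asy_runs_on_unit_circle_general S l k hU h2 h3 h4 h14 ha hk
end

section
/- Assume s14 ≠ 0, define a := s33 − s13·s34/s14, and assume |a| ≠ 1. Let k > 0 be a real number and define, for real L > 1, s22^asy(L) := s22 + ( s24·s43·s32 − s23·(1 + s44)·s32 )/D(L) + ( s24·(exp(−2ikL) − s33)·s42 + s23·s34·s42 )/D(L), where D(L) := (1 + s44)·(−exp(−2ikL) + s33) − s34·s43 (which is nonzero for all L > 1). Then the set { L ∈ ℝ : L > 1 and s22^asy(L) = −1 } is infinite. -/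
/-!
Terminating port 4 of `S` with reflection coefficient `-1` leaves a unitary `3 × 3` scattering
matrix; the relations on the first row say that it maps port 1 to itself, so on ports 2, 3 it is a
unitary `2 × 2` matrix `U`. With `z = exp(-2ikL)`, `s22^asy = U₀₀ + U₀₁ U₁₀ / (z - U₁₁)`, so
`s22^asy = -1` becomes `(1 + U₀₀) z = U₁₁ + det U`. For a unitary `2 × 2` matrix
`U₁₁ = det U · conj U₀₀` and `|det U| = 1`, hence both sides of that linear equation have the same
modulus and it has a unimodular solution `z`, which is `exp(-2ikL)` for an unbounded set of `L`.
The hypothesis `|a| ≠ 1` says `|U₁₁| ≠ 1`, which keeps the denominators away from zero.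
-/

open Complex Real Matrix

namespace Matrix

variable {K : Type*} [Field K] {n : ℕ}

/-- The scattering matrix left when the last port is terminated with reflection coefficient `r`,
i.e. the wave leaving through that port is sent back into it multiplied by `r`. -/
def terminateLast (S : Matrix (Fin (n + 1)) (Fin (n + 1)) K) (r : K) :
    Matrix (Fin n) (Fin n) K :=
  fun i j => S i.castSucc j.castSucc
    + r * S i.castSucc (Fin.last n) * S (Fin.last n) j.castSucc
      / (1 - r * S (Fin.last n) (Fin.last n))

theorem terminateLast_mem_unitaryGroup [StarRing K] {S : Matrix (Fin (n + 1)) (Fin (n + 1)) K}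
    {r : K} (hS : S ∈ unitaryGroup (Fin (n + 1)) K) (hr : star r * r = 1)
    (hc : 1 - r * S (Fin.last n) (Fin.last n) ≠ 0) :
    S.terminateLast r ∈ unitaryGroup (Fin n) K := by
  rw [mem_unitaryGroup_iff] at hS ⊢
  have hrow (i k : Fin (n + 1)) : ∑ j : Fin n, S i j.castSucc * star (S k j.castSucc) =
      (1 : Matrix (Fin (n + 1)) (Fin (n + 1)) K) i k
        - S i (Fin.last n) * star (S k (Fin.last n)) := by
    rw [← hS, mul_apply, Fin.sum_univ_castSucc]
    simp [star_apply]
  have hc' : star (1 - r * S (Fin.last n) (Fin.last n)) ≠ 0 := star_ne_zero.mpr hc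
  set c := 1 - r * S (Fin.last n) (Fin.last n)
  ext i k
  have hsum : ∑ j : Fin n, S.terminateLast r i j * star (S.terminateLast r k j) =
      ∑ j : Fin n, S i.castSucc j.castSucc * star (S k.castSucc j.castSucc)
      + star (r * S k.castSucc (Fin.last n) / c) *
        ∑ j : Fin n, S i.castSucc j.castSucc * star (S (Fin.last n) j.castSucc)
      + r * S i.castSucc (Fin.last n) / c *
        ∑ j : Fin n, S (Fin.last n) j.castSucc * star (S k.castSucc j.castSucc)
      + r * S i.castSucc (Fin.last n) / c * star (r * S k.castSucc (Fin.last n) / c) *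
        ∑ j : Fin n, S (Fin.last n) j.castSucc * star (S (Fin.last n) j.castSucc) := by
    simp only [Finset.mul_sum, ← Finset.sum_add_distrib]
    refine Finset.sum_congr rfl fun j _ => ?_
    simp only [terminateLast, star_add, star_mul', star_div₀]
    ring
  rw [mul_apply]
  simp only [star_apply]
  rw [hsum, hrow, hrow, hrow, hrow]
  simp only [one_apply, Fin.castSucc_inj, Fin.castSucc_ne_last, (Fin.castSucc_ne_last _).symm,
    if_true, if_false, star_mul', star_div₀]
  field_simp
  simp only [c, star_sub, star_one, star_mul']
  linear_combination S i.castSucc (Fin.last n) * star (S k.castSucc (Fin.last n)) * hr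

-- `hrow` says the wave `eᵢ + r m eₙ` leaves as `eᵢ + m eₙ`, which already obeys the termination
-- condition on port `n`.
theorem terminateLast_apply_eq_one_apply (S : Matrix (Fin (n + 1)) (Fin (n + 1)) K) (r m : K)
    (hc : 1 - r * S (Fin.last n) (Fin.last n) ≠ 0) (i : Fin n)
    (hrow : ∀ j, S i.castSucc j + r * m * S (Fin.last n) j =
      (1 : Matrix (Fin (n + 1)) (Fin (n + 1)) K) i.castSucc j
        + m * (1 : Matrix (Fin (n + 1)) (Fin (n + 1)) K) (Fin.last n) j)
    (j : Fin n) :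
    S.terminateLast r i j = (1 : Matrix (Fin n) (Fin n) K) i j := by
  have hj := hrow j.castSucc
  have hlast := hrow (Fin.last n)
  simp only [one_apply, Fin.castSucc_inj, Fin.castSucc_ne_last, (Fin.castSucc_ne_last _).symm,
    if_true, if_false] at hj hlast
  have hi : S i.castSucc (Fin.last n) = m * (1 - r * S (Fin.last n) (Fin.last n)) := by
    linear_combination hlast
  rw [terminateLast, hi, one_apply]
  field_simp
  linear_combination hj

theorem submatrix_succ_mem_unitaryGroup {R : Type*} [CommRing R] [StarRing R]
    {U : Matrix (Fin (n + 1)) (Fin (n + 1)) R} (hU : U ∈ unitaryGroup (Fin (n + 1)) R)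
    (h0 : ∀ j, U 0 j = (1 : Matrix (Fin (n + 1)) (Fin (n + 1)) R) 0 j) :
    U.submatrix Fin.succ Fin.succ ∈ unitaryGroup (Fin n) R := by
  rw [mem_unitaryGroup_iff] at hU ⊢
  have hcol (i : Fin n) : U i.succ 0 = 0 := by
    have h := congrFun (congrFun hU 0) i.succ
    simp only [mul_apply, h0, one_apply, star_apply] at h
    simpa [Fin.succ_ne_zero, eq_comm (a := (0 : Fin (n + 1)))] using h
  ext i k
  have h := congrFun (congrFun hU i.succ) k.succ
  simpa [mul_apply, Fin.sum_univ_succ, hcol, star_apply, one_apply] using h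

theorem apply_one_one_eq_det_mul_star {R : Type*} [CommRing R] [StarRing R]
    {U : Matrix (Fin 2) (Fin 2) R} (hU : U ∈ unitaryGroup (Fin 2) R) :
    U 1 1 = U.det * star (U 0 0) := by
  have hadj : U.adjugate = U.det • star U := by
    rw [← mul_one U.adjugate, ← mem_unitaryGroup_iff.mp hU, ← Matrix.mul_assoc, adjugate_mul,
      smul_one_mul]
  simpa [adjugate_fin_two] using congrFun (congrFun hadj 0) 0

theorem norm_apply_one_one_add_det {U : Matrix (Fin 2) (Fin 2) ℂ}
    (hU : U ∈ unitaryGroup (Fin 2) ℂ) : ‖U 1 1 + U.det‖ = ‖1 + U 0 0‖ := by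
  have hdet : ‖U.det‖ = 1 := CStarRing.norm_of_mem_unitary (det_of_mem_unitary hU)
  rw [apply_one_one_eq_det_mul_star hU,
    show U.det * star (U 0 0) + U.det = U.det * star (1 + U 0 0) by rw [star_add, star_one]; ring,
    norm_mul, norm_star, hdet, one_mul]

end Matrix

theorem Complex.exists_norm_eq_one_mul_eq {x y : ℂ} (h : ‖x‖ = ‖y‖) :
    ∃ w : ℂ, ‖w‖ = 1 ∧ x * w = y := by
  rcases eq_or_ne x 0 with rfl | hx
  · exact ⟨1, norm_one, by simpa [eq_comm] using h⟩
  · refine ⟨y / x, ?_, mul_div_cancel₀ y hx⟩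
    rw [norm_div, ← h, div_self (norm_ne_zero_iff.mpr hx)]

theorem infinite_setOf_cexp_eq {k : ℝ} (hk : 0 < k) {w : ℂ} (hw : ‖w‖ = 1) (a : ℝ) :
    {L : ℝ | a < L ∧ cexp (-(2 * I * k * L)) = w}.Infinite := by
  refine Set.infinite_of_not_bddAbove fun ⟨M, hM⟩ => ?_
  set L₀ := -w.arg / (2 * k)
  have hp : 0 < π / k := div_pos pi_pos hk
  obtain ⟨N, hN⟩ := exists_nat_gt ((max a M - L₀) / (π / k))
  have hL : max a M < L₀ + N * (π / k) := by
    rw [div_lt_iff₀ hp] at hN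
    linarith
  have hexp : cexp (-(2 * I * k * ↑(L₀ + N * (π / k)))) = w := by
    have harg : -(2 * I * k * ↑(L₀ + N * (π / k))) =
        w.arg * I + ((-N : ℤ) : ℂ) * (2 * π * I) := by
      have hk0 : (k : ℂ) ≠ 0 := ofReal_ne_zero.mpr hk.ne'
      simp only [L₀]
      push_cast
      field_simp
      ring
    rw [harg, Complex.exp_add, exp_int_mul_two_pi_mul_I, mul_one]
    simpa [hw] using norm_mul_exp_arg_mul_I w
  have hle := hM ⟨(le_max_left a M).trans_lt hL, hexp⟩
  linarith [le_max_right a M]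

/-- Ports 2 and 3 of `S` once port 4 is terminated with reflection coefficient `-1`
(port 1 decouples under the hypotheses of the theorem). -/
noncomputable def reducedScattering (S : Matrix (Fin 4) (Fin 4) ℂ) : Matrix (Fin 2) (Fin 2) ℂ :=
  (S.terminateLast (-1)).submatrix Fin.succ Fin.succ

/-- `s22^asy` as a function of `z = exp(-2ikL)`. -/
noncomputable def asymptoticReflection (S : Matrix (Fin 4) (Fin 4) ℂ) (z : ℂ) : ℂ :=
  S 1 1
    + (S 1 3 * S 3 2 * S 2 1 - S 1 2 * (1 + S 3 3) * S 2 1)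
        / ((1 + S 3 3) * (-z + S 2 2) - S 2 3 * S 3 2)
    + (S 1 3 * (z - S 2 2) * S 3 1 + S 1 2 * S 2 3 * S 3 1)
        / ((1 + S 3 3) * (-z + S 2 2) - S 2 3 * S 3 2)

-- The denominator is `(1 + s44) (U₁₁ - z)` for `U = reducedScattering S`.
theorem asymptoticReflection_eq_neg_one {S : Matrix (Fin 4) (Fin 4) ℂ} {z : ℂ}
    (hc : 1 + S 3 3 ≠ 0) (hz : z ≠ reducedScattering S 1 1)
    (h : (1 + reducedScattering S 0 0) * z = reducedScattering S 1 1 + (reducedScattering S).det) :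
    asymptoticReflection S z = -1 := by
  simp only [reducedScattering, submatrix_apply, terminateLast, det_fin_two, Fin.isValue,
    Fin.succ_zero_eq_one, Fin.succ_one_eq_two, Fin.castSucc_one, Fin.reduceCastSucc,
    Fin.reduceLast, neg_mul, one_mul, sub_neg_eq_add, ne_eq] at hz h
  have hD : (1 + S 3 3) * (-z + S 2 2) - S 2 3 * S 3 2 ≠ 0 := by
    contrapose! hz
    field_simp
    linear_combination -hz
  rw [asymptoticReflection, add_assoc, ← add_div, add_div' _ _ _ hD, div_eq_iff hD]
  field_simp at h
  refine mul_left_cancel₀ hc ?_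
  linear_combination -h

theorem trapped_modes_infinitely_often_general (S : Matrix (Fin 4) (Fin 4) ℂ) (l : ℂ) (k : ℝ)
    (hU : S * S.conjTranspose = 1)
    (h1 : S 0 0 + l * S 3 0 = 1)
    (h2 : S 0 1 + l * S 3 1 = 0)
    (h3 : S 0 2 + l * S 3 2 = 0)
    (h4 : S 0 3 + l * S 3 3 = -l)
    (h14 : S 0 3 ≠ 0)
    (ha : ‖S 2 2 - S 0 2 * S 2 3 / S 0 3‖ ≠ 1)
    (hk : 0 < k) :
    {L : ℝ | 1 < L ∧
      S 1 1
        + (S 1 3 * S 3 2 * S 2 1 - S 1 2 * (1 + S 3 3) * S 2 1)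
            / ((1 + S 3 3) * (-Complex.exp (-(2 * Complex.I * (k : ℂ) * (L : ℂ))) + S 2 2)
                - S 2 3 * S 3 2)
        + (S 1 3 * (Complex.exp (-(2 * Complex.I * (k : ℂ) * (L : ℂ))) - S 2 2) * S 3 1
            + S 1 2 * S 2 3 * S 3 1)
            / ((1 + S 3 3) * (-Complex.exp (-(2 * Complex.I * (k : ℂ) * (L : ℂ))) + S 2 2)
                - S 2 3 * S 3 2)
      = -1}.Infinite := by
  have hc : 1 + S 3 3 ≠ 0 := fun h => h14 (by linear_combination h4 - l * h)
  have hl : l ≠ 0 := fun h => h14 (by linear_combination h4 - (1 + S 3 3) * h)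
  have hc' : 1 - (-1) * S 3 3 ≠ 0 := by rwa [neg_one_mul, sub_neg_eq_add]
  have hrow (j : Fin 4) : S 0 j + (-1) * (-l) * S 3 j = (1 : Matrix (Fin 4) (Fin 4) ℂ) 0 j
      + (-l) * (1 : Matrix (Fin 4) (Fin 4) ℂ) 3 j := by
    fin_cases j
    · simpa [one_apply] using h1
    · simpa using h2
    · simpa using h3
    · simpa [one_apply] using h4
  have hR : reducedScattering S ∈ unitaryGroup (Fin 2) ℂ :=
    submatrix_succ_mem_unitaryGroup
      (terminateLast_mem_unitaryGroup (mem_unitaryGroup_iff.mpr hU) (by norm_num) hc')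
      (terminateLast_apply_eq_one_apply S (-1) (-l) hc' 0 hrow)
  have hR11 : ‖reducedScattering S 1 1‖ ≠ 1 := by
    convert ha using 3
    rw [show S 0 2 = -l * S 3 2 by linear_combination h3,
      show S 0 3 = -l * (1 + S 3 3) by linear_combination h4]
    simp only [reducedScattering, submatrix_apply, terminateLast, Fin.isValue,
      Fin.succ_one_eq_two, Fin.reduceCastSucc, Fin.reduceLast, neg_mul, one_mul, sub_neg_eq_add]
    field_simp
    ring
  obtain ⟨w, hw, hRw⟩ := exists_norm_eq_one_mul_eq (norm_apply_one_one_add_det hR).symm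
  refine (infinite_setOf_cexp_eq hk hw 1).mono ?_
  rintro L ⟨hL, hexp⟩
  refine ⟨hL, asymptoticReflection_eq_neg_one hc (fun h => hR11 ?_) (by rwa [hexp])⟩
  rw [← h, hexp, hw]

/-- For a 4×4 unitary symmetric matrix `S` (entries `S i j`, with `S 0 0 = s11`, …,
`S 3 3 = s44`) satisfying the relations `s11 + λ·s41 = 1`, `s12 + λ·s42 = 0`,
`s13 + λ·s43 = 0`, `s14 + λ·s44 = -λ`, with `s14 ≠ 0`, `|a| ≠ 1` for
`a := s33 - s13·s34/s14`, and `k > 0`: the set of `L > 1` such that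
`s22^asy(L) = -1` (with `s22^asy` and `D` as in the asymptotic formula) is infinite. -/
theorem trapped_modes_infinitely_often (S : Matrix (Fin 4) (Fin 4) ℂ) (l : ℂ) (k : ℝ)
    (hU : S * S.conjTranspose = 1)
    (hSym : ∀ i j, S j i = S i j)
    (h1 : S 0 0 + l * S 3 0 = 1)
    (h2 : S 0 1 + l * S 3 1 = 0)
    (h3 : S 0 2 + l * S 3 2 = 0)
    (h4 : S 0 3 + l * S 3 3 = -l)
    (h14 : S 0 3 ≠ 0)
    (ha : ‖S 2 2 - S 0 2 * S 2 3 / S 0 3‖ ≠ 1)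
    (hk : 0 < k) :
    {L : ℝ | 1 < L ∧
      S 1 1
        + (S 1 3 * S 3 2 * S 2 1 - S 1 2 * (1 + S 3 3) * S 2 1)
            / ((1 + S 3 3) * (-Complex.exp (-(2 * Complex.I * (k : ℂ) * (L : ℂ))) + S 2 2)
                - S 2 3 * S 3 2)
        + (S 1 3 * (Complex.exp (-(2 * Complex.I * (k : ℂ) * (L : ℂ))) - S 2 2) * S 3 1
            + S 1 2 * S 2 3 * S 3 1)
            / ((1 + S 3 3) * (-Complex.exp (-(2 * Complex.I * (k : ℂ) * (L : ℂ))) + S 2 2)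
                - S 2 3 * S 3 2)
      = -1}.Infinite :=
  trapped_modes_infinitely_often_general S l k hU h1 h2 h3 h4 h14 ha hk
end
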